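/- arXiv:2408.14031 — 5 statements merged into one kernel-verified Lean document; each statement's English description precedes it below -/
import Mathlib

section
/- Realization respects isomorphism: for typing contexts Γ₁ and Γ₂ containing no unrestricted bindings, if the graph interpretations are isomorphic, ⟦Γ₁⟧ ≃ ⟦Γ₂⟧, then the realizations are syntactically equivalent, ⌜⟦Γ₁⟧⌝ ≡ ⌜⟦Γ₂⟧⌝. -/
set_option autoImplicit false
set_option linter.unusedVariables false

namespace LawOrder

/-! ## Graph representations -/

structure Graph (B : Type) where
  n : ℕ
  label : ℕ → B
  edge : ℕ → ℕ → Prop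
  edge_lt : ∀ i j, edge i j → i < n ∧ j < n

namespace Graph

variable {B : Type}

/-- The edge relation is acyclic. -/
def Acyclic (G : Graph B) : Prop := ∀ i, ¬ Relation.TransGen G.edge i i

/-- The empty graph representation. -/
def zero (B : Type) [Inhabited B] : Graph B :=
  ⟨0, fun _ => default, fun _ _ => False, fun _ _ h => h.elim⟩

/-- Union of two graph representations: disjoint union, second part shifted. -/
def union (G₁ G₂ : Graph B) : Graph B where
  n := G₁.n + G₂.n
  label := fun i => if i < G₁.n then G₁.label i else G₂.label (i - G₁.n)
  edge := fun i j =>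
    G₁.edge i j ∨ (G₁.n ≤ i ∧ G₁.n ≤ j ∧ G₂.edge (i - G₁.n) (j - G₁.n))
  edge_lt := by
    intro i j h
    rcases h with h | ⟨hi, hj, h⟩
    · have := G₁.edge_lt i j h; omega
    · have := G₂.edge_lt _ _ h; omega

/-- Join of two graph representations: union plus all edges from the first
    part to the second part. -/
def join (G₁ G₂ : Graph B) : Graph B where
  n := G₁.n + G₂.n
  label := fun i => if i < G₁.n then G₁.label i else G₂.label (i - G₁.n)
  edge := fun i j =>
    G₁.edge i j ∨ (G₁.n ≤ i ∧ G₁.n ≤ j ∧ G₂.edge (i - G₁.n) (j - G₁.n)) ∨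
      (i < G₁.n ∧ G₁.n ≤ j ∧ j < G₁.n + G₂.n)
  edge_lt := by
    intro i j h
    rcases h with h | ⟨hi, hj, h⟩ | ⟨hi, hj₁, hj₂⟩
    · have := G₁.edge_lt i j h; omega
    · have := G₂.edge_lt _ _ h; omega
    · omega

/-- Isomorphism of graph representations. -/
def Iso (G₁ G₂ : Graph B) : Prop :=
  G₁.n = G₂.n ∧ ∃ f : Fin G₁.n → Fin G₁.n, Function.Bijective f ∧
    (∀ i j : Fin G₁.n, G₁.edge (f i).val (f j).val ↔ G₂.edge i.val j.val) ∧
    (∀ i : Fin G₁.n, G₁.label (f i).val = G₂.label i.val)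

/-- `G₁` is a spanning graph representation of `G₂`: same vertices and labels,
    and the edges of `G₁` are contained in those of `G₂`. -/
def Spanning (G₁ G₂ : Graph B) : Prop :=
  G₁.n = G₂.n ∧ (∀ i, i < G₁.n → G₁.label i = G₂.label i) ∧
    ∀ i j, G₁.edge i j → G₂.edge i j

/-- `f` is a topological ordering of `G`: `f` enumerates the vertices so that
    edges always point forward. -/
def IsTopOrder (G : Graph B) (f : Equiv.Perm (Fin G.n)) : Prop :=
  ∀ i j : Fin G.n, G.edge i.val j.val → f.symm i < f.symm j

/-- `G` has exactly one topological ordering. -/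
def Traceable (G : Graph B) : Prop :=
  ∃! f : Equiv.Perm (Fin G.n), G.IsTopOrder f

/-- The identity enumeration is a topological ordering: all edges increase. -/
def TopOrdered (G : Graph B) : Prop := ∀ i j, G.edge i j → i < j

/-- `k` is a union cut of `G`: no edge crosses from below `k` to `k` or above. -/
def UnionCut (G : Graph B) (k : ℕ) : Prop :=
  0 < k ∧ k < G.n ∧ ∀ i j, i < k → k ≤ j → ¬ G.edge i j

/-- `k` is a join cut of `G`: every pair crossing from below `k` to `k` or
    above (within range) is an edge. -/
def JoinCut (G : Graph B) (k : ℕ) : Prop :=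
  0 < k ∧ k < G.n ∧ ∀ i j, i < k → k ≤ j → j < G.n → G.edge i j

/-- Lower part of the index cut at `k`. -/
def cutLo (G : Graph B) (k : ℕ) : Graph B where
  n := k
  label := G.label
  edge := fun i j => G.edge i j ∧ i < k ∧ j < k
  edge_lt := fun i j h => ⟨h.2.1, h.2.2⟩

/-- Upper part of the index cut at `k` (re-indexed from 0). -/
def cutHi (G : Graph B) (k : ℕ) : Graph B where
  n := G.n - k
  label := fun i => G.label (i + k)
  edge := fun i j => G.edge (i + k) (j + k)
  edge_lt := by
    intro i j h
    have := G.edge_lt _ _ h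
    omega

/-- Weak connectedness: any two vertices are joined by an undirected path. -/
def WeaklyConnected (G : Graph B) : Prop :=
  ∀ i j, i < G.n → j < G.n →
    Relation.ReflTransGen (fun a b => G.edge a b ∨ G.edge b a) i j

/-- Union of a nonempty sequence of graph representations. -/
def unionList (G : Graph B) (L : List (Graph B)) : Graph B :=
  L.foldl union G

end Graph

/-! ## Contexts built from bindings with ordered and unordered composition -/

inductive GCtx (B : Type) where
  | empty : GCtx B
  | bind : B → GCtx B
  | comma : GCtx B → GCtx B → GCtx B
  | par : GCtx B → GCtx B → GCtx B

/-- Context patterns: contexts with a single hole. -/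
inductive GPat (B : Type) where
  | hole : GPat B
  | commaL : GPat B → GCtx B → GPat B
  | commaR : GCtx B → GPat B → GPat B
  | parL : GPat B → GCtx B → GPat B
  | parR : GCtx B → GPat B → GPat B

def GPat.fill {B : Type} : GPat B → GCtx B → GCtx B
  | .hole, Γ => Γ
  | .commaL G Δ, Γ => .comma (G.fill Γ) Δ
  | .commaR Δ G, Γ => .comma Δ (G.fill Γ)
  | .parL G Δ, Γ => .par (G.fill Γ) Δ
  | .parR Δ G, Γ => .par Δ (G.fill Γ)

def GCtx.toList {B : Type} : GCtx B → List B
  | .empty => []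
  | .bind b => [b]
  | .comma Γ₁ Γ₂ => Γ₁.toList ++ Γ₂.toList
  | .par Γ₁ Γ₂ => Γ₁.toList ++ Γ₂.toList

/-- Graph part of the interpretation of a context: unrestricted bindings
    contribute no vertex, ordered bindings one vertex; `comma` is join,
    `par` is union. -/
def GCtx.interpG {B : Type} [Inhabited B] (unr : B → Bool) : GCtx B → Graph B
  | .empty => Graph.zero B
  | .bind b =>
      if unr b then Graph.zero B
      else ⟨1, fun _ => b, fun _ _ => False, fun _ _ h => h.elim⟩
  | .comma Γ₁ Γ₂ => (interpG unr Γ₁).join (interpG unr Γ₂)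
  | .par Γ₁ Γ₂ => (interpG unr Γ₁).union (interpG unr Γ₂)

/-- Set part of the interpretation of a context: the set of its
    unrestricted bindings. -/
def GCtx.unrSet {B : Type} (unr : B → Bool) : GCtx B → Set B
  | .empty => ∅
  | .bind b => if unr b then {b} else ∅
  | .comma Γ₁ Γ₂ => unrSet unr Γ₁ ∪ unrSet unr Γ₂
  | .par Γ₁ Γ₂ => unrSet unr Γ₁ ∪ unrSet unr Γ₂

/-! ## Syntactic equivalence of contexts: the least congruence generated by
    the monoid laws for `,`, the commutative monoid laws for `∥`, and the
    rules for unrestricted bindings. -/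

inductive CtxEquiv {B : Type} (unr : B → Bool) : GCtx B → GCtx B → Prop where
  | commaIdL : ∀ Γ : GCtx B, CtxEquiv unr (GCtx.comma GCtx.empty Γ) Γ
  | commaIdR : ∀ Γ : GCtx B, CtxEquiv unr (GCtx.comma Γ GCtx.empty) Γ
  | commaAssoc : ∀ Γ₁ Γ₂ Γ₃ : GCtx B,
      CtxEquiv unr (GCtx.comma Γ₁ (GCtx.comma Γ₂ Γ₃))
        (GCtx.comma (GCtx.comma Γ₁ Γ₂) Γ₃)
  | parId : ∀ Γ : GCtx B, CtxEquiv unr (GCtx.par GCtx.empty Γ) Γ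
  | parComm : ∀ Γ₁ Γ₂ : GCtx B, CtxEquiv unr (GCtx.par Γ₁ Γ₂) (GCtx.par Γ₂ Γ₁)
  | parAssoc : ∀ Γ₁ Γ₂ Γ₃ : GCtx B,
      CtxEquiv unr (GCtx.par Γ₁ (GCtx.par Γ₂ Γ₃)) (GCtx.par (GCtx.par Γ₁ Γ₂) Γ₃)
  | unrMove : ∀ (G : GPat B) (b : B), unr b = true →
      CtxEquiv unr (GPat.fill G (GCtx.bind b))
        (GCtx.par (GPat.fill G GCtx.empty) (GCtx.bind b))
  | unrDemote : ∀ b : B, unr b = true →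
      CtxEquiv unr (GCtx.par (GCtx.bind b) (GCtx.bind b)) (GCtx.bind b)
  | congr : ∀ (G : GPat B) (Γ₁ Γ₂ : GCtx B), CtxEquiv unr Γ₁ Γ₂ →
      CtxEquiv unr (GPat.fill G Γ₁) (GPat.fill G Γ₂)
  | refl : ∀ Γ : GCtx B, CtxEquiv unr Γ Γ
  | symm : ∀ Γ₁ Γ₂ : GCtx B, CtxEquiv unr Γ₂ Γ₁ → CtxEquiv unr Γ₁ Γ₂
  | trans : ∀ Γ₁ Γ₂ Γ₃ : GCtx B,
      CtxEquiv unr Γ₁ Γ₂ → CtxEquiv unr Γ₂ Γ₃ → CtxEquiv unr Γ₁ Γ₃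

/-! ## Realization of a graph representation as a context (defined by
    recursion on the number of vertices, splitting at the minimum union cut
    or the minimum join cut). -/

open Classical in
noncomputable def Graph.realize {B : Type} (G : Graph B) : Option (GCtx B) :=
  if G.n = 0 then some GCtx.empty
  else if G.n = 1 then some (GCtx.bind (G.label 0))
  else if hu : ∃ k, G.UnionCut k then
    (Graph.realize (G.cutLo (sInf {k | G.UnionCut k}))).bind fun Γ₁ =>
      (Graph.realize (G.cutHi (sInf {k | G.UnionCut k}))).map fun Γ₂ =>
        GCtx.par Γ₁ Γ₂
  else if hj : ∃ k, G.JoinCut k then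
    (Graph.realize (G.cutLo (sInf {k | G.JoinCut k}))).bind fun Γ₁ =>
      (Graph.realize (G.cutHi (sInf {k | G.JoinCut k}))).map fun Γ₂ =>
        GCtx.comma Γ₁ Γ₂
  else none
termination_by G.n
decreasing_by
  · have h := Nat.sInf_mem (s := {k | G.UnionCut k}) hu
    simp only [Set.mem_setOf_eq] at h
    obtain ⟨h1, h2, -⟩ := h
    simpa only [Graph.cutLo] using h2
  · have h := Nat.sInf_mem (s := {k | G.UnionCut k}) hu
    simp only [Set.mem_setOf_eq] at h
    obtain ⟨h1, h2, -⟩ := h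
    simp only [Graph.cutHi]
    omega
  · have h := Nat.sInf_mem (s := {k | G.JoinCut k}) hj
    simp only [Set.mem_setOf_eq] at h
    obtain ⟨h1, h2, -⟩ := h
    simpa only [Graph.cutLo] using h2
  · have h := Nat.sInf_mem (s := {k | G.JoinCut k}) hj
    simp only [Set.mem_setOf_eq] at h
    obtain ⟨h1, h2, -⟩ := h
    simp only [Graph.cutHi]
    omega

/-!
Interpretations of contexts are topologically ordered (edges point forward), and every index
interval of at least two of their vertices has a union or a join cut; this makes the
realization defined. Realizations of isomorphic topologically ordered graphs are then compared
by induction on the number of vertices.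

Without a union cut, a realizable graph is weakly connected and splits at its minimal join cut
`k`. Every vertex below `k` has an edge to every vertex from `k` on, so under an isomorphism onto
a topologically ordered graph the images of `[0, k)` precede all other vertices; by counting they
form `[0, k)` again, and the two joins split compatibly.

With a union cut, the part below the minimal union cut is the weakly connected component of the
first vertex. Components of a realizable graph are index intervals, so an isomorphism carries the
first component of one graph onto some component `[a, b)` of the other, and any component can be
peeled off as a parallel factor, up to associativity and commutativity of `∥`.
-/

namespace CtxEquiv

variable {B : Type} {unr : B → Bool} {Γ₁ Γ₁' Γ₂ Γ₂' : GCtx B}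

theorem par_congr (h₁ : CtxEquiv unr Γ₁ Γ₁') (h₂ : CtxEquiv unr Γ₂ Γ₂') :
    CtxEquiv unr (.par Γ₁ Γ₂) (.par Γ₁' Γ₂') :=
  .trans _ _ _ (.congr (.parL .hole Γ₂) _ _ h₁) (.congr (.parR Γ₁' .hole) _ _ h₂)

theorem comma_congr (h₁ : CtxEquiv unr Γ₁ Γ₁') (h₂ : CtxEquiv unr Γ₂ Γ₂') :
    CtxEquiv unr (.comma Γ₁ Γ₂) (.comma Γ₁' Γ₂') :=
  .trans _ _ _ (.congr (.commaL .hole Γ₂) _ _ h₁) (.congr (.commaR Γ₁' .hole) _ _ h₂)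

theorem par_left_comm (Γ₁ Γ₂ Γ₃ : GCtx B) :
    CtxEquiv unr (.par Γ₁ (.par Γ₂ Γ₃)) (.par Γ₂ (.par Γ₁ Γ₃)) :=
  .trans _ _ _ (.parAssoc _ _ _) <| .trans _ _ _
    (.congr (.parL .hole Γ₃) _ _ (.parComm _ _)) (.symm _ _ (.parAssoc _ _ _))

end CtxEquiv

namespace Graph

open Set

variable {B : Type} {G H K : Graph B}

@[ext]
theorem ext {G H : Graph B} (hn : G.n = H.n) (hl : G.label = H.label) (he : G.edge = H.edge) :
    G = H := by
  cases G; cases H; subst hn hl he; rfl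

/-- The subgraph induced along `α`, on the vertices `α 0, …, α (m - 1)`. -/
def comap (G : Graph B) (α : ℕ → ℕ) (m : ℕ) : Graph B where
  n := m
  label i := G.label (α i)
  edge i j := G.edge (α i) (α j) ∧ i < m ∧ j < m
  edge_lt _ _ h := h.2

def slice (G : Graph B) (a b : ℕ) : Graph B := G.comap (· + a) (b - a)

def sliceCompl (G : Graph B) (a b : ℕ) : Graph B :=
  G.comap (fun i => if i < a then i else i + (b - a)) (G.n - (b - a))

theorem cutLo_eq_comap (G : Graph B) (k : ℕ) : G.cutLo k = G.comap id k := rfl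

theorem cutHi_eq_comap (G : Graph B) (k : ℕ) : G.cutHi k = G.comap (· + k) (G.n - k) := by
  ext i j
  · rfl
  · rfl
  · simp only [cutHi, comap]
    constructor
    · intro e; have := G.edge_lt _ _ e; exact ⟨e, by omega, by omega⟩
    · exact And.left

theorem comap_comap {α β : ℕ → ℕ} {m m' : ℕ} (hβ : MapsTo β (Iio m') (Iio m)) :
    (G.comap α m).comap β m' = G.comap (α ∘ β) m' := by
  ext i j
  · rfl
  · rfl
  · simp only [comap, Function.comp]
    constructor
    · rintro ⟨⟨e, -⟩, hi, hj⟩; exact ⟨e, hi, hj⟩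
    · rintro ⟨e, hi, hj⟩; exact ⟨⟨e, hβ hi, hβ hj⟩, hi, hj⟩

/-- `G` and `H` coincide up to the labels of non-vertices. -/
structure Agree (G H : Graph B) : Prop where
  n_eq : G.n = H.n
  label_eq : ∀ i < G.n, G.label i = H.label i
  edge_iff : ∀ i j, G.edge i j ↔ H.edge i j

namespace Agree

theorem symm (h : G.Agree H) : H.Agree G :=
  ⟨h.n_eq.symm, fun i hi => (h.label_eq i (h.n_eq ▸ hi)).symm, fun i j => (h.edge_iff i j).symm⟩

theorem trans (h : G.Agree H) (h' : H.Agree K) : G.Agree K :=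
  ⟨h.n_eq.trans h'.n_eq, fun i hi => (h.label_eq i hi).trans (h'.label_eq i (h.n_eq ▸ hi)),
    fun i j => (h.edge_iff i j).trans (h'.edge_iff i j)⟩

theorem edge_eq (h : G.Agree H) : G.edge = H.edge := by
  ext i j; exact h.edge_iff i j

theorem comap (h : G.Agree H) {β : ℕ → ℕ} {m : ℕ} (hβ : MapsTo β (Iio m) (Iio G.n)) :
    (G.comap β m).Agree (H.comap β m) :=
  ⟨rfl, fun i hi => h.label_eq _ (hβ hi), fun i j => by simp only [Graph.comap, h.edge_eq]⟩

theorem unionCut_iff (h : G.Agree H) (k : ℕ) : G.UnionCut k ↔ H.UnionCut k := by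
  simp only [UnionCut, h.n_eq, h.edge_eq]

theorem joinCut_iff (h : G.Agree H) (k : ℕ) : G.JoinCut k ↔ H.JoinCut k := by
  simp only [JoinCut, h.n_eq, h.edge_eq]

theorem weaklyConnected_iff (h : G.Agree H) : G.WeaklyConnected ↔ H.WeaklyConnected := by
  simp only [WeaklyConnected, h.n_eq, h.edge_eq]

theorem cutLo (h : G.Agree H) {k : ℕ} (hk : k ≤ G.n) : (G.cutLo k).Agree (H.cutLo k) :=
  h.comap fun _ hi => lt_of_lt_of_le hi hk

theorem cutHi (h : G.Agree H) (k : ℕ) : (G.cutHi k).Agree (H.cutHi k) := by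
  rw [cutHi_eq_comap, cutHi_eq_comap, ← h.n_eq]
  exact h.comap fun i hi => by simp only [mem_Iio] at hi ⊢; omega

end Agree

theorem comap_congr {α α' : ℕ → ℕ} {m : ℕ} (h : EqOn α α' (Iio m)) :
    (G.comap α m).Agree (G.comap α' m) := by
  refine ⟨rfl, fun i hi => congrArg G.label (h hi), fun i j => ?_⟩
  simp only [comap]
  constructor
  · rintro ⟨e, hi, hj⟩; exact ⟨h hi ▸ h hj ▸ e, hi, hj⟩
  · rintro ⟨e, hi, hj⟩; exact ⟨(h hi).symm ▸ (h hj).symm ▸ e, hi, hj⟩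

theorem comap_id_agree (G : Graph B) : (G.comap id G.n).Agree G := by
  refine ⟨rfl, fun _ _ => rfl, fun i j => ⟨fun e => e.1, fun e => ⟨e, G.edge_lt i j e⟩⟩⟩

noncomputable def minUnionCut (G : Graph B) : ℕ := sInf {k | G.UnionCut k}

noncomputable def minJoinCut (G : Graph B) : ℕ := sInf {k | G.JoinCut k}

theorem minUnionCut_spec (hu : ∃ k, G.UnionCut k) : G.UnionCut G.minUnionCut := Nat.sInf_mem hu

theorem minJoinCut_spec (hj : ∃ k, G.JoinCut k) : G.JoinCut G.minJoinCut := Nat.sInf_mem hj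

theorem realize_of_n_eq_zero (h : G.n = 0) : G.realize = some .empty := by
  rw [realize, if_pos h]

theorem realize_of_n_eq_one (h : G.n = 1) : G.realize = some (.bind (G.label 0)) := by
  rw [realize, if_neg (by omega), if_pos h]

theorem realize_of_unionCut (h2 : 2 ≤ G.n) (hu : ∃ k, G.UnionCut k) :
    G.realize = (G.cutLo G.minUnionCut).realize.bind fun Γ₁ =>
      (G.cutHi G.minUnionCut).realize.map (.par Γ₁) := by
  rw [realize, if_neg (by omega), if_neg (by omega), dif_pos hu]; rfl

theorem realize_of_joinCut (h2 : 2 ≤ G.n) (hu : ¬ ∃ k, G.UnionCut k) (hj : ∃ k, G.JoinCut k) :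
    G.realize = (G.cutLo G.minJoinCut).realize.bind fun Γ₁ =>
      (G.cutHi G.minJoinCut).realize.map (.comma Γ₁) := by
  rw [realize, if_neg (by omega), if_neg (by omega), dif_neg hu, dif_pos hj]; rfl

theorem realize_of_not_joinCut (h2 : 2 ≤ G.n) (hu : ¬ ∃ k, G.UnionCut k)
    (hj : ¬ ∃ k, G.JoinCut k) : G.realize = none := by
  rw [realize, if_neg (by omega), if_neg (by omega), dif_neg hu, dif_neg hj]

theorem realize_eq_some_of_unionCut (h2 : 2 ≤ G.n) (hu : ∃ k, G.UnionCut k) {Δ : GCtx B} :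
    G.realize = some Δ ↔ ∃ Δ₁ Δ₂, (G.cutLo G.minUnionCut).realize = some Δ₁ ∧
      (G.cutHi G.minUnionCut).realize = some Δ₂ ∧ Δ = .par Δ₁ Δ₂ := by
  simp only [realize_of_unionCut h2 hu, Option.bind_eq_some_iff, Option.map_eq_some_iff]
  grind

theorem realize_eq_some_of_not_unionCut (h2 : 2 ≤ G.n) (hu : ¬ ∃ k, G.UnionCut k)
    {Δ : GCtx B} : G.realize = some Δ ↔ (∃ k, G.JoinCut k) ∧
      ∃ Δ₁ Δ₂, (G.cutLo G.minJoinCut).realize = some Δ₁ ∧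
        (G.cutHi G.minJoinCut).realize = some Δ₂ ∧ Δ = .comma Δ₁ Δ₂ := by
  by_cases hj : ∃ k, G.JoinCut k
  · simp only [realize_of_joinCut h2 hu hj, Option.bind_eq_some_iff, Option.map_eq_some_iff]
    grind
  · simp [realize_of_not_joinCut h2 hu hj, hj]

theorem realize_congr (h : G.Agree H) : G.realize = H.realize := by
  induction hn : G.n using Nat.strong_induction_on generalizing G H with
  | _ n ih =>
  subst hn
  have hU : {k | G.UnionCut k} = {k | H.UnionCut k} := Set.ext h.unionCut_iff
  have hJ : {k | G.JoinCut k} = {k | H.JoinCut k} := Set.ext h.joinCut_iff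
  have hmin {k : ℕ} (hk0 : 0 < k) (hk : k < G.n) :
      (G.cutLo k).realize = (H.cutLo k).realize ∧ (G.cutHi k).realize = (H.cutHi k).realize :=
    ⟨ih k hk (h.cutLo hk.le) rfl, ih (G.n - k) (by omega) (h.cutHi k) rfl⟩
  rcases Nat.lt_or_ge G.n 2 with hlt | h2
  · obtain h0 | h1 : G.n = 0 ∨ G.n = 1 := by omega
    · rw [realize_of_n_eq_zero h0, realize_of_n_eq_zero (h.n_eq ▸ h0)]
    · rw [realize_of_n_eq_one h1, realize_of_n_eq_one (h.n_eq ▸ h1), h.label_eq 0 (by omega)]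
  have h2' : 2 ≤ H.n := h.n_eq ▸ h2
  by_cases hu : ∃ k, G.UnionCut k
  · have hu' : ∃ k, H.UnionCut k := by simpa only [h.unionCut_iff] using hu
    have hk : G.minUnionCut = H.minUnionCut := congrArg sInf hU
    obtain ⟨hlo, hhi⟩ := hmin (minUnionCut_spec hu).1 (minUnionCut_spec hu).2.1
    rw [realize_of_unionCut h2 hu, realize_of_unionCut h2' hu', hlo, hhi, hk]
  have hu' : ¬ ∃ k, H.UnionCut k := by simpa only [h.unionCut_iff] using hu
  by_cases hj : ∃ k, G.JoinCut k
  · have hj' : ∃ k, H.JoinCut k := by simpa only [h.joinCut_iff] using hj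
    have hk : G.minJoinCut = H.minJoinCut := congrArg sInf hJ
    obtain ⟨hlo, hhi⟩ := hmin (minJoinCut_spec hj).1 (minJoinCut_spec hj).2.1
    rw [realize_of_joinCut h2 hu hj, realize_of_joinCut h2' hu' hj', hlo, hhi, hk]
  have hj' : ¬ ∃ k, H.JoinCut k := by simpa only [h.joinCut_iff] using hj
  rw [realize_of_not_joinCut h2 hu hj, realize_of_not_joinCut h2' hu' hj']

theorem TopOrdered.comap (ht : G.TopOrdered) {α : ℕ → ℕ} (hα : StrictMono α) (m : ℕ) :
    (G.comap α m).TopOrdered := fun _ _ e => hα.lt_iff_lt.mp (ht _ _ e.1)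

theorem TopOrdered.cutLo (ht : G.TopOrdered) (k : ℕ) : (G.cutLo k).TopOrdered :=
  ht.comap strictMono_id k

theorem TopOrdered.cutHi (ht : G.TopOrdered) (k : ℕ) : (G.cutHi k).TopOrdered := by
  rw [cutHi_eq_comap]; exact ht.comap (strictMono_id.add_const k) _

theorem TopOrdered.slice (ht : G.TopOrdered) (a b : ℕ) : (G.slice a b).TopOrdered :=
  ht.comap (strictMono_id.add_const a) _

theorem TopOrdered.sliceCompl (ht : G.TopOrdered) (a b : ℕ) : (G.sliceCompl a b).TopOrdered :=
  ht.comap (fun i j h => by split_ifs <;> omega) _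

def Reach (G : Graph B) : ℕ → ℕ → Prop :=
  Relation.ReflTransGen fun a b => G.edge a b ∨ G.edge b a

theorem Reach.symm {i j : ℕ} (h : G.Reach i j) : G.Reach j i := by
  induction h with
  | refl => exact .refl
  | tail _ hbc ih => exact .head hbc.symm ih

theorem Reach.trans {i j l : ℕ} (h : G.Reach i j) (h' : G.Reach j l) : G.Reach i l :=
  Relation.ReflTransGen.trans h h'

theorem Reach.of_comap {α : ℕ → ℕ} {m i j : ℕ} (h : (G.comap α m).Reach i j) :
    G.Reach (α i) (α j) :=
  Relation.ReflTransGen.lift α (fun _ _ => Or.imp And.left And.left) _ _ h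

theorem Reach.of_cutHi {k i j : ℕ} (h : (G.cutHi k).Reach i j) : G.Reach (i + k) (j + k) :=
  Relation.ReflTransGen.lift (· + k) (fun _ _ => id) _ _ h

theorem UnionCut.lt_iff_of_reach (ht : G.TopOrdered) {k i j : ℕ} (hk : G.UnionCut k)
    (h : G.Reach i j) : i < k ↔ j < k := by
  induction h with
  | refl => rfl
  | @tail a b _ hab ih =>
    rw [ih]
    rcases hab with e | e
    · have := ht _ _ e; have : ¬ (a < k ∧ k ≤ b) := fun h => hk.2.2 _ _ h.1 h.2 e; omega
    · have := ht _ _ e; have : ¬ (b < k ∧ k ≤ a) := fun h => hk.2.2 _ _ h.1 h.2 e; omega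

theorem UnionCut.reach_cutHi (ht : G.TopOrdered) {k i j : ℕ} (hk : G.UnionCut k)
    (h : G.Reach i j) (hi : k ≤ i) : (G.cutHi k).Reach (i - k) (j - k) := by
  induction h with
  | refl => exact .refl
  | @tail b c hib hbc ih =>
    have hb : k ≤ b := by have := hk.lt_iff_of_reach ht hib; omega
    have hc : k ≤ c := by have := hk.lt_iff_of_reach ht (.single hbc : G.Reach b c); omega
    refine ih.tail ?_
    simpa only [cutHi, Nat.sub_add_cancel hb, Nat.sub_add_cancel hc] using hbc

theorem UnionCut.not_weaklyConnected (ht : G.TopOrdered) {k : ℕ} (hk : G.UnionCut k) :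
    ¬ G.WeaklyConnected := fun hc => by
  have hk0 := hk.1
  have hkn := hk.2.1
  have := hk.lt_iff_of_reach ht (hc 0 (G.n - 1) (by omega) (by omega))
  omega

theorem JoinCut.weaklyConnected {k : ℕ} (hk : G.JoinCut k) : G.WeaklyConnected := by
  obtain ⟨hk0, hkn, hall⟩ := hk
  have toLast : ∀ x < G.n, G.Reach x (G.n - 1) := fun x hx => by
    by_cases hxk : x < k
    · exact .single (.inl (hall x _ hxk (by omega) (by omega)))
    · exact (Relation.ReflTransGen.single (.inr (hall 0 x hk0 (by omega) hx))).trans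
        (.single (.inl (hall 0 _ hk0 (by omega) (by omega))))
  exact fun i j hi hj => (toLast i hi).trans (toLast j hj).symm

theorem two_le_of_unionCut (hu : ∃ k, G.UnionCut k) : 2 ≤ G.n := by
  obtain ⟨k, hk0, hkn, -⟩ := hu; omega

theorem weaklyConnected_of_realize {Δ : GCtx B} (hr : G.realize = some Δ)
    (hu : ¬ ∃ k, G.UnionCut k) : G.WeaklyConnected := by
  rcases Nat.lt_or_ge G.n 2 with hlt | h2
  · intro i j hi hj
    obtain rfl : i = j := by omega
    exact .refl
  · obtain ⟨⟨k, hk⟩, -⟩ := (realize_eq_some_of_not_unionCut h2 hu).mp hr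
    exact hk.weaklyConnected

theorem exists_unionCut_iff (ht : G.TopOrdered) {Δ : GCtx B} (hr : G.realize = some Δ) :
    (∃ k, G.UnionCut k) ↔ ¬ G.WeaklyConnected :=
  ⟨fun ⟨_, hk⟩ => hk.not_weaklyConnected ht, fun hc => by_contra fun hu =>
    hc (weaklyConnected_of_realize hr hu)⟩

theorem not_exists_unionCut_cutLo_minUnionCut (hu : ∃ k, G.UnionCut k) :
    ¬ ∃ k, (G.cutLo G.minUnionCut).UnionCut k := by
  rintro ⟨k, hk0, hk, hcut⟩
  have hmin := minUnionCut_spec hu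
  have hGk : G.UnionCut k := by
    refine ⟨hk0, lt_trans hk hmin.2.1, fun i j hi hj e => ?_⟩
    by_cases hjm : j < G.minUnionCut
    · exact hcut i j hi hj ⟨e, lt_trans hi hk, hjm⟩
    · exact hmin.2.2 i j (lt_trans hi hk) (not_lt.mp hjm) e
  exact absurd (Nat.sInf_le hGk) (not_le.mpr hk)

theorem weaklyConnected_cutLo_minUnionCut {Δ : GCtx B} (hr : G.realize = some Δ)
    (hu : ∃ k, G.UnionCut k) : (G.cutLo G.minUnionCut).WeaklyConnected := by
  obtain ⟨Δ₁, -, hΔ₁, -⟩ := (realize_eq_some_of_unionCut (two_le_of_unionCut hu) hu).mp hr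
  exact weaklyConnected_of_realize hΔ₁ (not_exists_unionCut_cutLo_minUnionCut hu)

theorem minUnionCut_eq (ht : G.TopOrdered) {k : ℕ} (hk : G.UnionCut k)
    (hc : (G.cutLo k).WeaklyConnected) : G.minUnionCut = k := by
  refine le_antisymm (Nat.sInf_le hk) (not_lt.mp fun hlt => ?_)
  have hmin := minUnionCut_spec ⟨k, hk⟩
  have hreach : G.Reach 0 (k - 1) := Reach.of_comap (hc 0 (k - 1) hk.1 (Nat.sub_lt hk.1 one_pos))
  have := (hmin.lt_iff_of_reach ht hreach).mp hmin.1
  omega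

def IsComponentIco (G : Graph B) (a b : ℕ) : Prop := ∀ j < G.n, (G.Reach a j ↔ a ≤ j ∧ j < b)

theorem IsComponentIco.reach_iff {a b v : ℕ} (hc : G.IsComponentIco a b) (hv : a ≤ v ∧ v < b)
    (hvn : v < G.n) {j : ℕ} (hj : j < G.n) : G.Reach v j ↔ a ≤ j ∧ j < b := by
  have hav := (hc v hvn).mpr hv
  exact ⟨fun h => (hc j hj).mp (hav.trans h), fun h => hav.symm.trans ((hc j hj).mpr h)⟩

theorem isComponentIco_minUnionCut (ht : G.TopOrdered) {Δ : GCtx B} (hr : G.realize = some Δ)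
    (hu : ∃ k, G.UnionCut k) : G.IsComponentIco 0 G.minUnionCut := by
  have hmin := minUnionCut_spec hu
  have hc := weaklyConnected_cutLo_minUnionCut hr hu
  exact fun j _ => ⟨fun h => ⟨j.zero_le, (hmin.lt_iff_of_reach ht h).mp hmin.1⟩,
    fun h => Reach.of_comap (hc 0 j hmin.1 h.2)⟩

theorem exists_isComponentIco (ht : G.TopOrdered) {Δ : GCtx B} (hr : G.realize = some Δ)
    {v : ℕ} (hv : v < G.n) : ∃ a b, a ≤ v ∧ v < b ∧ b ≤ G.n ∧ G.IsComponentIco a b := by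
  induction hn : G.n using Nat.strong_induction_on generalizing G Δ v with
  | _ n ih =>
  subst hn
  by_cases hu : ∃ k, G.UnionCut k
  swap
  · have hc := weaklyConnected_of_realize hr hu
    exact ⟨0, G.n, Nat.zero_le v, hv, le_rfl, fun j hj => ⟨fun _ => ⟨j.zero_le, hj⟩,
      fun _ => hc 0 j (by omega) hj⟩⟩
  obtain ⟨Δ₁, Δ₂, -, hΔ₂, -⟩ := (realize_eq_some_of_unionCut (two_le_of_unionCut hu) hu).mp hr
  have hmin := minUnionCut_spec hu
  set k := G.minUnionCut
  have hk0 := hmin.1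
  have hkn := hmin.2.1
  by_cases hvk : v < k
  · exact ⟨0, k, v.zero_le, hvk, hkn.le, isComponentIco_minUnionCut ht hr hu⟩
  obtain ⟨a, b, hav, hvb, hb, hcomp⟩ :=
    ih (G.n - k) (by omega) (ht.cutHi k) hΔ₂ (v := v - k) (by simp only [cutHi]; omega) rfl
  have hb' : b ≤ G.n - k := hb
  refine ⟨a + k, b + k, by omega, by omega, by omega, fun j hj => ?_⟩
  by_cases hjk : j < k
  · have hnr : ¬ G.Reach (a + k) j := fun h => by
      have := hmin.lt_iff_of_reach ht h; omega
    exact ⟨fun h => absurd h hnr, fun h => by omega⟩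
  have hj' : j - k < (G.cutHi k).n := by simp only [cutHi]; omega
  have key := hcomp (j - k) hj'
  constructor
  · intro h
    have := key.mp (by simpa using hmin.reach_cutHi ht h (by omega))
    omega
  · intro h
    simpa [Nat.sub_add_cancel (not_lt.mp hjk)] using (key.mpr (by omega)).of_cutHi

theorem slice_zero_left (G : Graph B) (k : ℕ) : G.slice 0 k = G.cutLo k := rfl

theorem sliceCompl_zero_left (G : Graph B) (k : ℕ) : G.sliceCompl 0 k = G.cutHi k := by
  rw [cutHi_eq_comap]; simp [sliceCompl]

theorem slice_n_right (G : Graph B) (k : ℕ) : G.slice k G.n = G.cutHi k := (cutHi_eq_comap G k).symm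

theorem sliceCompl_n_right_agree {k : ℕ} (hk : k ≤ G.n) :
    (G.sliceCompl k G.n).Agree (G.cutLo k) := by
  have hm : G.n - (G.n - k) = k := by omega
  rw [sliceCompl, hm, cutLo_eq_comap]
  exact comap_congr fun i hi => if_pos hi

theorem slice_cutHi {k a b : ℕ} (hka : k ≤ a) (hb : b ≤ G.n) :
    (G.cutHi k).slice (a - k) (b - k) = G.slice a b := by
  rw [cutHi_eq_comap, slice, comap_comap fun i hi => by simp only [mem_Iio] at hi ⊢; omega, slice]
  congr 1
  · funext i; simp only [Function.comp]; omega
  · omega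

theorem UnionCut.sliceCompl {k a b : ℕ} (hk : G.UnionCut k) (hka : k ≤ a) (hlt : b - a < G.n - k) :
    (G.sliceCompl a b).UnionCut k := by
  refine ⟨hk.1, by simp only [Graph.sliceCompl, comap]; omega, fun i j hi hj e => ?_⟩
  simp only [Graph.sliceCompl, comap, if_pos (lt_of_lt_of_le hi hka)] at e
  exact hk.2.2 i _ hi (by split_ifs at e ⊢ <;> omega) e.1

theorem cutLo_sliceCompl_agree {k a b : ℕ} (hka : k ≤ a) (hkn : k ≤ G.n - (b - a)) :
    ((G.sliceCompl a b).cutLo k).Agree (G.cutLo k) := by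
  rw [cutLo_eq_comap, sliceCompl, comap_comap fun i hi => by simp only [mem_Iio, id] at hi ⊢; omega,
    cutLo_eq_comap]
  exact comap_congr fun i hi => by simp only [mem_Iio] at hi; simp [show i < a by omega]

theorem cutHi_sliceCompl {k a b : ℕ} (hka : k ≤ a) (hab : a ≤ b) :
    (G.sliceCompl a b).cutHi k = (G.cutHi k).sliceCompl (a - k) (b - k) := by
  rw [cutHi_eq_comap, sliceCompl, comap_comap, cutHi_eq_comap, sliceCompl, comap_comap]
  · congr 1
    · funext i; simp only [Function.comp]; split_ifs <;> omega
    · simp only [comap]; omega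
  all_goals intro i hi; simp only [mem_Iio, comap] at hi ⊢; (try split_ifs) <;> omega

theorem IsComponentIco.cutHi (ht : G.TopOrdered) {k a b : ℕ} (hc : G.IsComponentIco a b)
    (hk : G.UnionCut k) (hka : k ≤ a) : (G.cutHi k).IsComponentIco (a - k) (b - k) := by
  intro j (hj : j < G.n - k)
  constructor
  · intro h
    have := (hc (j + k) (by omega)).mp (by simpa [Nat.sub_add_cancel hka] using h.of_cutHi)
    omega
  · intro h
    simpa using hk.reach_cutHi ht ((hc (j + k) (by omega)).mpr (by omega)) hka

theorem realize_sliceCompl_of_unionCut (ht : G.TopOrdered) {k a b : ℕ} (hk : G.UnionCut k)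
    (hlow : (G.cutLo k).WeaklyConnected) (hka : k ≤ a) (hab : a ≤ b) (hlt : b - a < G.n - k)
    {Δ₁ Δ₂ : GCtx B} (h₁ : (G.cutLo k).realize = some Δ₁)
    (h₂ : ((G.cutHi k).sliceCompl (a - k) (b - k)).realize = some Δ₂) :
    (G.sliceCompl a b).realize = some (.par Δ₁ Δ₂) := by
  have hk' : (G.sliceCompl a b).UnionCut k := hk.sliceCompl hka hlt
  have hmin : (G.sliceCompl a b).minUnionCut = k := minUnionCut_eq (ht.sliceCompl a b) hk'
    ((cutLo_sliceCompl_agree hka (by omega)).weaklyConnected_iff.mpr hlow)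
  refine (realize_eq_some_of_unionCut (two_le_of_unionCut ⟨k, hk'⟩) ⟨k, hk'⟩).mpr
    ⟨Δ₁, Δ₂, ?_, ?_, rfl⟩
  · rwa [hmin, realize_congr (cutLo_sliceCompl_agree hka (by omega))]
  · rwa [hmin, cutHi_sliceCompl hka hab]

theorem realize_peel (unr : B → Bool) (ht : G.TopOrdered) {Δ : GCtx B}
    (hr : G.realize = some Δ) {a b : ℕ} (hab : a < b) (hb : b ≤ G.n) (hlt : b - a < G.n)
    (hc : G.IsComponentIco a b) : ∃ Δ₁ Δ₂, (G.slice a b).realize = some Δ₁ ∧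
      (G.sliceCompl a b).realize = some Δ₂ ∧ CtxEquiv unr Δ (.par Δ₁ Δ₂) := by
  induction hn : G.n using Nat.strong_induction_on generalizing G Δ a b with
  | _ n ih =>
  subst hn
  have hu : ∃ k, G.UnionCut k := by
    refine (exists_unionCut_iff ht hr).mpr fun hconn => ?_
    by_cases ha : 0 < a
    · have := (hc 0 (by omega)).mp (hconn a 0 (by omega) (by omega)); omega
    · have := (hc b (by omega)).mp (hconn a b (by omega) (by omega)); omega
  obtain ⟨Δ₁, Δ₂, hΔ₁, hΔ₂, rfl⟩ :=
    (realize_eq_some_of_unionCut (two_le_of_unionCut hu) hu).mp hr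
  have hmin := minUnionCut_spec hu
  have hlow := weaklyConnected_cutLo_minUnionCut hr hu
  set k := G.minUnionCut
  have hk0 := hmin.1
  have hkn := hmin.2.1
  by_cases hak : a < k
  · obtain rfl : a = 0 := by
      have := (hc 0 (by omega)).mp (Reach.of_comap (hlow a 0 hak hk0)); omega
    obtain rfl : b = k := by
      have := (hc (k - 1) (by omega)).mp
        (Reach.of_comap (hlow 0 (k - 1) hk0 (Nat.sub_lt hk0 one_pos)))
      have := (hmin.lt_iff_of_reach ht ((hc (b - 1) (by omega)).mpr (by omega))).mp hk0
      omega
    exact ⟨Δ₁, Δ₂, hΔ₁, by rwa [sliceCompl_zero_left], .refl _⟩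
  rw [not_lt] at hak
  by_cases hab' : b - a = G.n - k
  · obtain ⟨rfl, rfl⟩ : a = k ∧ b = G.n := by omega
    exact ⟨Δ₂, Δ₁, by rwa [slice_n_right],
      by rwa [realize_congr (sliceCompl_n_right_agree hkn.le)], .parComm _ _⟩
  obtain ⟨Δ₃, Δ₄, hΔ₃, hΔ₄, hEq⟩ := ih (G.n - k) (by omega) (ht.cutHi k) hΔ₂
    (a := a - k) (b := b - k) (by omega) (show b - k ≤ G.n - k by omega)
    (show b - k - (a - k) < G.n - k by omega) (hc.cutHi ht hmin hak) rfl
  refine ⟨Δ₃, .par Δ₁ Δ₄, by rwa [← slice_cutHi hak hb], ?_, ?_⟩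
  · exact realize_sliceCompl_of_unionCut ht hmin hlow hak hab.le (by omega) hΔ₁ hΔ₄
  · exact .trans _ _ _ (.par_congr (.refl _) hEq) (.par_left_comm _ _ _)

/-- `φ` is an isomorphism from `H` onto `G`: vertex `i` of `H` is vertex `φ i` of `G`. -/
structure IsoVia (G H : Graph B) (φ : ℕ → ℕ) : Prop where
  n_eq : G.n = H.n
  bijOn : BijOn φ (Iio H.n) (Iio H.n)
  agree : (G.comap φ H.n).Agree H

theorem Iso.exists_isoVia (h : G.Iso H) : ∃ φ, G.IsoVia H φ := by
  obtain ⟨hn, f, hf, hedge, hlabel⟩ := h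
  let φ i := if hi : i < G.n then (f ⟨i, hi⟩ : ℕ) else i
  have hφ {i : ℕ} (hi : i < G.n) : φ i = f ⟨i, hi⟩ := dif_pos hi
  have hmaps : MapsTo φ (Iio H.n) (Iio H.n) := fun i hi => by
    rw [mem_Iio, ← hn] at hi ⊢; rw [hφ hi]; exact Fin.isLt _
  refine ⟨φ, hn, (Finite.injOn_iff_bijOn_of_mapsTo (finite_Iio _) hmaps).mp ?_, rfl, ?_, ?_⟩
  · intro i hi j hj hij
    rw [mem_Iio, ← hn] at hi hj
    rw [hφ hi, hφ hj] at hij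
    exact congrArg Fin.val (hf.1 (Fin.ext hij))
  · intro i hi
    rw [← hn] at hi
    simp only [comap, hφ hi, hlabel ⟨i, hi⟩]
  · intro i j
    simp only [comap]
    constructor
    · rintro ⟨e, hi, hj⟩
      rw [← hn] at hi hj
      rwa [hφ hi, hφ hj, hedge ⟨i, hi⟩ ⟨j, hj⟩] at e
    · intro e
      obtain ⟨hi, hj⟩ := H.edge_lt i j e
      rw [← hn] at hi hj
      exact ⟨by rwa [hφ hi, hφ hj, hedge ⟨i, hi⟩ ⟨j, hj⟩], hn ▸ hi, hn ▸ hj⟩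

namespace IsoVia

variable {φ : ℕ → ℕ}

theorem symm (e : G.IsoVia H φ) : H.IsoVia G (Function.invFunOn φ (Iio H.n)) := by
  set ψ := Function.invFunOn φ (Iio H.n)
  have hinv : InvOn ψ φ (Iio H.n) (Iio H.n) := e.bijOn.invOn_invFunOn
  have hψ : BijOn ψ (Iio H.n) (Iio H.n) := e.bijOn.symm hinv.symm
  refine ⟨e.n_eq.symm, e.n_eq ▸ hψ, ?_⟩
  have hid : (G.comap id H.n).Agree G := e.n_eq ▸ comap_id_agree G
  have h := e.agree.symm.comap hψ.mapsTo
  rw [comap_comap hψ.mapsTo] at h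
  rw [e.n_eq]
  exact h.trans ((comap_congr fun x hx => hinv.2 hx).trans hid)

theorem edge_iff (e : G.IsoVia H φ) {i j : ℕ} (hi : i < H.n) (hj : j < H.n) :
    G.edge (φ i) (φ j) ↔ H.edge i j :=
  (and_iff_left ⟨hi, hj⟩).symm.trans (e.agree.edge_iff i j)

theorem reach (e : G.IsoVia H φ) {i j : ℕ} (h : H.Reach i j) : G.Reach (φ i) (φ j) := by
  have hreach : (G.comap φ H.n).Reach = H.Reach := by unfold Reach; rw [e.agree.edge_eq]
  exact Reach.of_comap (hreach ▸ h)

theorem reach_iff (e : G.IsoVia H φ) {i j : ℕ} (hi : i < H.n) (hj : j < H.n) :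
    G.Reach (φ i) (φ j) ↔ H.Reach i j := by
  refine ⟨fun h => ?_, e.reach⟩
  have hinv := e.bijOn.invOn_invFunOn.1
  simpa only [hinv hi, hinv hj] using e.symm.reach h

theorem weaklyConnected_iff (e : G.IsoVia H φ) : G.WeaklyConnected ↔ H.WeaklyConnected := by
  constructor
  · intro hc i j hi hj
    exact (e.reach_iff hi hj).mp
      (hc _ _ (e.n_eq ▸ e.bijOn.mapsTo hi) (e.n_eq ▸ e.bijOn.mapsTo hj))
  · intro hc i j hi hj
    obtain ⟨i, hi', rfl⟩ := e.bijOn.surjOn (show i < H.n from e.n_eq ▸ hi)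
    obtain ⟨j, hj', rfl⟩ := e.bijOn.surjOn (show j < H.n from e.n_eq ▸ hj)
    exact e.reach (hc i j hi' hj')

theorem comap (e : G.IsoVia H φ) {α β ψ : ℕ → ℕ} {m : ℕ} (hβ : MapsTo β (Iio m) (Iio H.n))
    (hβinj : InjOn β (Iio m)) (hψ : MapsTo ψ (Iio m) (Iio m))
    (hcomm : ∀ i < m, α (ψ i) = φ (β i)) : (G.comap α m).IsoVia (H.comap β m) ψ := by
  refine ⟨rfl, (Finite.injOn_iff_bijOn_of_mapsTo (finite_Iio m) hψ).mp ?_, ?_⟩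
  · intro i hi j hj hij
    have := congrArg α hij
    rw [hcomm i hi, hcomm j hj] at this
    exact hβinj hi hj (e.bijOn.injOn (hβ hi) (hβ hj) this)
  · have h : (G.comap (α ∘ ψ) m).Agree (G.comap (φ ∘ β) m) := comap_congr hcomm
    rw [← comap_comap hβ] at h
    change ((G.comap α m).comap ψ m).Agree _
    rw [comap_comap hψ]
    exact h.trans (e.agree.comap hβ)

/-- If `φ x ≥ k` for some `x < k`, the `n - k` distinct vertices `φ y` with `k ≤ y < n` would
all lie strictly between `φ x` and `n`, as `G` is topologically ordered. -/
theorem mapsTo_of_joinCut (e : G.IsoVia H φ) (ht : G.TopOrdered) {k : ℕ} (hk : H.JoinCut k) :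
    MapsTo φ (Iio k) (Iio k) := by
  intro x hx
  rw [mem_Iio] at hx ⊢
  by_contra hkx
  have hmaps : MapsTo φ (Finset.Ico k H.n) (Finset.Ioo (φ x) H.n) := by
    intro y hy
    simp only [Finset.coe_Ico, Finset.coe_Ioo, mem_Ico, mem_Ioo] at hy ⊢
    have hxy := ht _ _ ((e.edge_iff (by omega) hy.2).mpr (hk.2.2 x y hx hy.1 hy.2))
    exact ⟨hxy, e.bijOn.mapsTo (mem_Iio.mpr hy.2)⟩
  have := Finset.card_le_card_of_injOn φ hmaps
    (e.bijOn.injOn.mono fun y hy => by simp only [Finset.coe_Ico, mem_Ico] at hy; exact hy.2)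
  have hφx : φ x < H.n := e.bijOn.mapsTo (mem_Iio.mpr (hx.trans hk.2.1))
  simp only [Nat.card_Ico, Nat.card_Ioo] at this
  omega

theorem lt_iff_of_joinCut (e : G.IsoVia H φ) (ht : G.TopOrdered) {k : ℕ} (hk : H.JoinCut k)
    {i : ℕ} (hi : i < H.n) : i < k ↔ φ i < k := by
  have hmaps := e.mapsTo_of_joinCut ht hk
  refine ⟨fun h => hmaps h, fun h => ?_⟩
  have hbij := (Finite.injOn_iff_bijOn_of_mapsTo (finite_Iio k) hmaps).mp
    (e.bijOn.injOn.mono (Iio_subset_Iio hk.2.1.le))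
  obtain ⟨j, hj, hji⟩ := hbij.surjOn h
  rw [← e.bijOn.injOn (Iio_subset_Iio hk.2.1.le hj) hi hji]
  exact hj

theorem joinCut (e : G.IsoVia H φ) (ht : G.TopOrdered) {k : ℕ} (hk : H.JoinCut k) :
    G.JoinCut k := by
  refine ⟨hk.1, e.n_eq ▸ hk.2.1, fun i j hi hj hjn => ?_⟩
  obtain ⟨i, hi', rfl⟩ := e.bijOn.surjOn (show i < H.n by rw [← e.n_eq]; omega)
  obtain ⟨j, hj', rfl⟩ := e.bijOn.surjOn (show j < H.n from e.n_eq ▸ hjn)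
  rw [mem_Iio] at hi' hj'
  rw [← e.lt_iff_of_joinCut ht hk hi'] at hi
  rw [← not_lt, ← e.lt_iff_of_joinCut ht hk hj', not_lt] at hj
  exact (e.edge_iff hi' hj').mpr (hk.2.2 i j hi hj hj')

theorem minJoinCut_eq (e : G.IsoVia H φ) (htG : G.TopOrdered) (htH : H.TopOrdered) :
    G.minJoinCut = H.minJoinCut :=
  congrArg sInf (Set.ext fun _ => ⟨e.symm.joinCut htH, e.joinCut htG⟩)

theorem sub_eq {k a b : ℕ} (e : G.IsoVia H φ)
    (h : ∀ i < H.n, i < k ↔ a ≤ φ i ∧ φ i < b) (hk : k ≤ H.n) (hb : b ≤ G.n) :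
    b - a = k := by
  have hmaps : MapsTo φ (Finset.range k) (Finset.Ico a b) := fun i hi => by
    simp only [Finset.coe_range, Finset.coe_Ico, mem_Iio, mem_Ico] at hi ⊢
    exact (h i (by omega)).mp hi
  have hsurj : SurjOn φ (Finset.range k) (Finset.Ico a b) := fun y hy => by
    simp only [Finset.coe_range, Finset.coe_Ico, mem_Iio, mem_Ico, mem_image] at hy ⊢
    obtain ⟨i, hi, rfl⟩ := e.bijOn.surjOn (show y < H.n by rw [← e.n_eq]; omega)
    exact ⟨i, (h i hi).mpr hy, rfl⟩
  have := Finset.card_nbij φ hmaps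
    (e.bijOn.injOn.mono fun i hi => by simp only [Finset.coe_range, mem_Iio] at hi ⊢; omega) hsurj
  simpa using this.symm

theorem slice {k a b : ℕ} (e : G.IsoVia H φ) (h : ∀ i < H.n, i < k ↔ a ≤ φ i ∧ φ i < b)
    (hk : k ≤ H.n) (hb : b ≤ G.n) : ∃ ψ, (G.slice a b).IsoVia (H.cutLo k) ψ := by
  have hba := e.sub_eq h hk hb
  refine ⟨(φ · - a), ?_⟩
  rw [Graph.slice, hba, cutLo_eq_comap]
  refine e.comap (fun i hi => lt_of_lt_of_le hi hk) (injOn_id _) (fun i hi => ?_) (fun i hi => ?_)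
  · have := (h i (lt_of_lt_of_le hi hk)).mp hi; simp only [mem_Iio]; omega
  · have := (h i (lt_of_lt_of_le hi hk)).mp hi; simp only [id]; omega

theorem sliceCompl {k a b : ℕ} (e : G.IsoVia H φ) (h : ∀ i < H.n, i < k ↔ a ≤ φ i ∧ φ i < b)
    (hk : k ≤ H.n) (hb : b ≤ G.n) : ∃ ψ, (G.sliceCompl a b).IsoVia (H.cutHi k) ψ := by
  refine ⟨fun i => if φ (i + k) < a then φ (i + k) else φ (i + k) - (b - a), ?_⟩
  have hn := e.n_eq
  have hba := e.sub_eq h hk hb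
  rw [Graph.sliceCompl, hba, cutHi_eq_comap, hn]
  have hout {i : ℕ} (hi : i < H.n - k) : φ (i + k) < H.n ∧ ¬ (a ≤ φ (i + k) ∧ φ (i + k) < b) :=
    ⟨e.bijOn.mapsTo (mem_Iio.mpr (by omega)), (h (i + k) (by omega)).not.mp (by omega)⟩
  refine e.comap (fun i hi => ?_) (add_left_injective k).injOn (fun i hi => ?_) (fun i hi => ?_)
  · simp only [mem_Iio] at hi ⊢; omega
  · have := hout hi; simp only [mem_Iio] at hi ⊢; split_ifs <;> omega
  · have := hout hi; split_ifs <;> omega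

theorem realize_eq_of_n_lt_two (e : G.IsoVia H φ) (h : H.n < 2) : G.realize = H.realize := by
  obtain h0 | h1 : H.n = 0 ∨ H.n = 1 := by omega
  · rw [realize_of_n_eq_zero h0, realize_of_n_eq_zero (e.n_eq.trans h0)]
  · have hφ : φ 0 = 0 := by
      have := e.bijOn.mapsTo (show 0 ∈ Iio H.n by simp [h1])
      simpa [h1] using this
    have hl : G.label (φ 0) = H.label 0 := e.agree.label_eq 0 (show 0 < H.n by omega)
    rw [hφ] at hl
    rw [realize_of_n_eq_one h1, realize_of_n_eq_one (e.n_eq.trans h1), hl]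

end IsoVia

theorem IsoVia.exists_isComponentIco_image {φ : ℕ → ℕ} (e : G.IsoVia H φ) (ht₁ : G.TopOrdered)
    (ht₂ : H.TopOrdered) {Δ₁ Δ₂ : GCtx B} (h₁ : G.realize = some Δ₁)
    (h₂ : H.realize = some Δ₂) (hu : ∃ k, H.UnionCut k) : ∃ a b, b ≤ G.n ∧
      G.IsComponentIco a b ∧ ∀ i < H.n, (i < H.minUnionCut ↔ a ≤ φ i ∧ φ i < b) := by
  have h0 : 0 < H.n := by have := two_le_of_unionCut hu; omega
  have hφ0 : φ 0 < G.n := e.n_eq ▸ e.bijOn.mapsTo h0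
  obtain ⟨a, b, hav, hvb, hbn, hc⟩ := exists_isComponentIco ht₁ h₁ hφ0
  refine ⟨a, b, hbn, hc, fun i hi => ?_⟩
  rw [← hc.reach_iff ⟨hav, hvb⟩ hφ0 (e.n_eq ▸ e.bijOn.mapsTo hi), e.reach_iff h0 hi,
    isComponentIco_minUnionCut ht₂ h₂ hu i hi, and_iff_right i.zero_le]

theorem ctxEquiv_of_isoVia (unr : B → Bool) {φ : ℕ → ℕ} (ht₁ : G.TopOrdered)
    (ht₂ : H.TopOrdered) (e : G.IsoVia H φ) {Δ₁ Δ₂ : GCtx B} (h₁ : G.realize = some Δ₁)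
    (h₂ : H.realize = some Δ₂) : CtxEquiv unr Δ₁ Δ₂ := by
  induction hn : H.n using Nat.strong_induction_on generalizing G H φ Δ₁ Δ₂ with
  | _ n ih =>
  subst hn
  rcases Nat.lt_or_ge H.n 2 with hlt | h2
  · rw [e.realize_eq_of_n_lt_two hlt, h₂, Option.some_inj] at h₁
    exact h₁ ▸ .refl _
  have hn := e.n_eq
  have h2' : 2 ≤ G.n := hn ▸ h2
  have hu_iff : (∃ k, G.UnionCut k) ↔ ∃ k, H.UnionCut k := by
    rw [exists_unionCut_iff ht₁ h₁, exists_unionCut_iff ht₂ h₂, e.weaklyConnected_iff]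
  by_cases hu : ∃ k, H.UnionCut k
  · obtain ⟨Δa, Δb, hΔa, hΔb, rfl⟩ := (realize_eq_some_of_unionCut h2 hu).mp h₂
    obtain ⟨a, b, hbn, hc, hφ⟩ := e.exists_isComponentIco_image ht₁ ht₂ h₁ h₂ hu
    obtain ⟨hk0, hk, -⟩ := minUnionCut_spec hu
    set k := H.minUnionCut
    have hba := e.sub_eq hφ hk.le hbn
    obtain ⟨Δ₃, Δ₄, hΔ₃, hΔ₄, hEq⟩ := realize_peel unr ht₁ h₁ (by omega) hbn (by omega) hc
    obtain ⟨ψ₁, e₁⟩ := e.slice hφ hk.le hbn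
    obtain ⟨ψ₂, e₂⟩ := e.sliceCompl hφ hk.le hbn
    exact .trans _ _ _ hEq <| .par_congr
      (ih k hk (ht₁.slice a b) (ht₂.cutLo k) e₁ hΔ₃ hΔa rfl)
      (ih (H.n - k) (by omega) (ht₁.sliceCompl a b) (ht₂.cutHi k) e₂ hΔ₄ hΔb rfl)
  · obtain ⟨hj, Δa, Δb, hΔa, hΔb, rfl⟩ := (realize_eq_some_of_not_unionCut h2 hu).mp h₂
    obtain ⟨-, Δa', Δb', hΔa', hΔb', rfl⟩ :=
      (realize_eq_some_of_not_unionCut h2' (hu_iff.not.mpr hu)).mp h₁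
    rw [e.minJoinCut_eq ht₁ ht₂] at hΔa' hΔb'
    have hk := minJoinCut_spec hj
    set k := H.minJoinCut
    have hφ : ∀ i < H.n, i < k ↔ 0 ≤ φ i ∧ φ i < k := fun i hi => by
      rw [e.lt_iff_of_joinCut ht₁ hk hi]; simp
    obtain ⟨ψ₁, e₁⟩ := e.slice hφ hk.2.1.le (hn ▸ hk.2.1.le)
    obtain ⟨ψ₂, e₂⟩ := e.sliceCompl hφ hk.2.1.le (hn ▸ hk.2.1.le)
    rw [slice_zero_left] at e₁
    rw [sliceCompl_zero_left] at e₂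
    exact .comma_congr (ih k hk.2.1 (ht₁.cutLo k) (ht₂.cutLo k) e₁ hΔa' hΔa rfl)
      (ih (H.n - k) (by have := hk.1; omega) (ht₁.cutHi k) (ht₂.cutHi k) e₂ hΔb' hΔb rfl)

def Splittable (G : Graph B) : Prop :=
  ∀ a b, a + 2 ≤ b → b ≤ G.n → ∃ k, (G.slice a b).UnionCut k ∨ (G.slice a b).JoinCut k

theorem Agree.splittable (h : G.Agree H) (hG : G.Splittable) : H.Splittable := by
  intro a b hab hb
  have hn := h.n_eq
  have hs : (G.slice a b).Agree (H.slice a b) :=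
    h.comap fun i hi => by simp only [mem_Iio] at hi ⊢; omega
  simpa only [hs.unionCut_iff, hs.joinCut_iff] using hG a b hab (h.n_eq ▸ hb)

theorem slice_cutLo {k a b : ℕ} (hb : b ≤ k) : (G.cutLo k).slice a b = G.slice a b :=
  comap_comap fun i hi => by simp only [mem_Iio] at hi ⊢; omega

theorem Splittable.cutLo (h : G.Splittable) {k : ℕ} (hk : k ≤ G.n) : (G.cutLo k).Splittable := by
  intro a b hab (hb : b ≤ k)
  rw [slice_cutLo hb]
  exact h a b hab (hb.trans hk)

theorem Splittable.cutHi (h : G.Splittable) (k : ℕ) : (G.cutHi k).Splittable := by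
  intro a b hab hb
  have hb' : b ≤ G.n - k := hb
  have hs := slice_cutHi (G := G) (a := a + k) (b := b + k) (Nat.le_add_left k a) (by omega)
  simp only [Nat.add_sub_cancel] at hs
  rw [hs]
  exact h (a + k) (b + k) (by omega) (by omega)

theorem Splittable.exists_realize (h : G.Splittable) : ∃ Δ, G.realize = some Δ := by
  induction hn : G.n using Nat.strong_induction_on generalizing G with
  | _ n ih =>
  subst hn
  rcases Nat.lt_or_ge G.n 2 with hlt | h2
  · obtain h0 | h1 : G.n = 0 ∨ G.n = 1 := by omega
    exacts [⟨_, realize_of_n_eq_zero h0⟩, ⟨_, realize_of_n_eq_one h1⟩]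
  have hparts {k : ℕ} (hk0 : 0 < k) (hkn : k < G.n) :
      (∃ Δ₁, (G.cutLo k).realize = some Δ₁) ∧ ∃ Δ₂, (G.cutHi k).realize = some Δ₂ :=
    ⟨ih k hkn (h.cutLo hkn.le) rfl, ih (G.n - k) (by omega) (h.cutHi k) rfl⟩
  by_cases hu : ∃ k, G.UnionCut k
  · have hk := minUnionCut_spec hu
    obtain ⟨⟨Δ₁, h₁⟩, Δ₂, h₂⟩ := hparts hk.1 hk.2.1
    exact ⟨_, (realize_eq_some_of_unionCut h2 hu).mpr ⟨Δ₁, Δ₂, h₁, h₂, rfl⟩⟩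
  have hall : (G.slice 0 G.n).Agree G := comap_id_agree G
  obtain ⟨k, hk | hk⟩ := h 0 G.n (by omega) le_rfl
  · exact absurd ⟨k, (hall.unionCut_iff k).mp hk⟩ hu
  have hj : ∃ k, G.JoinCut k := ⟨k, (hall.joinCut_iff k).mp hk⟩
  have hk := minJoinCut_spec hj
  obtain ⟨⟨Δ₁, h₁⟩, Δ₂, h₂⟩ := hparts hk.1 hk.2.1
  exact ⟨_, (realize_eq_some_of_not_unionCut h2 hu).mpr ⟨hj, Δ₁, Δ₂, h₁, h₂, rfl⟩⟩

theorem Splittable.of_cut {m : ℕ} (hm : m ≤ G.n) (hlo : (G.cutLo m).Splittable)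
    (hhi : (G.cutHi m).Splittable)
    (hcross : (∀ i j, i < m → m ≤ j → ¬ G.edge i j) ∨
      ∀ i j, i < m → m ≤ j → j < G.n → G.edge i j) : G.Splittable := by
  intro a b hab hb
  by_cases hbm : b ≤ m
  · rw [← slice_cutLo hbm]
    exact hlo a b hab hbm
  by_cases ham : m ≤ a
  · rw [← slice_cutHi ham hb]
    exact hhi (a - m) (b - m) (by omega) (show b - m ≤ G.n - m by omega)
  refine ⟨m - a, hcross.imp (fun hno => ⟨by omega, by simp only [slice, comap]; omega, ?_⟩)
    (fun hall => ⟨by omega, by simp only [slice, comap]; omega, ?_⟩)⟩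
  · exact fun i j hi hj e => hno (i + a) (j + a) (by omega) (by omega) e.1
  · intro i j hi hj hjn
    change j < b - a at hjn
    exact ⟨hall (i + a) (j + a) (by omega) (by omega) (by omega), by omega, hjn⟩

theorem TopOrdered.union {G₁ G₂ : Graph B} (h₁ : G₁.TopOrdered) (h₂ : G₂.TopOrdered) :
    (G₁.union G₂).TopOrdered := by
  rintro i j (e | ⟨-, -, e⟩)
  · exact h₁ i j e
  · have := h₂ _ _ e; omega

theorem TopOrdered.join {G₁ G₂ : Graph B} (h₁ : G₁.TopOrdered) (h₂ : G₂.TopOrdered) :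
    (G₁.join G₂).TopOrdered := by
  rintro i j (e | ⟨-, -, e⟩ | ⟨hi, hj, -⟩)
  · exact h₁ i j e
  · have := h₂ _ _ e; omega
  · omega

theorem cutLo_union_agree (G₁ G₂ : Graph B) : ((G₁.union G₂).cutLo G₁.n).Agree G₁ := by
  refine ⟨rfl, fun i hi => if_pos hi, fun i j => ?_⟩
  simp only [cutLo, union]
  have := G₁.edge_lt i j
  constructor
  · rintro ⟨e | ⟨hi, -⟩, hi', -⟩
    exacts [e, absurd hi' (not_lt.mpr hi)]
  · intro e; exact ⟨.inl e, this e⟩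

theorem cutHi_union_agree (G₁ G₂ : Graph B) : ((G₁.union G₂).cutHi G₁.n).Agree G₂ := by
  refine ⟨by simp [cutHi, union], fun i hi => by simp [cutHi, union], fun i j => ?_⟩
  simp only [cutHi, union, Nat.add_sub_cancel, Nat.le_add_left, true_and]
  have := G₁.edge_lt (i + G₁.n) (j + G₁.n)
  exact ⟨fun h => h.resolve_left fun e => absurd (this e).1 (by omega), .inr⟩

theorem cutLo_join_agree (G₁ G₂ : Graph B) : ((G₁.join G₂).cutLo G₁.n).Agree G₁ := by
  refine ⟨rfl, fun i hi => if_pos hi, fun i j => ?_⟩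
  simp only [cutLo, join]
  have := G₁.edge_lt i j
  constructor
  · rintro ⟨e | ⟨hi, -⟩ | ⟨-, hj, -⟩, hi', hj'⟩
    exacts [e, absurd hi' (not_lt.mpr hi), absurd hj' (not_lt.mpr hj)]
  · intro e; exact ⟨.inl e, this e⟩

theorem cutHi_join_agree (G₁ G₂ : Graph B) : ((G₁.join G₂).cutHi G₁.n).Agree G₂ := by
  refine ⟨by simp [cutHi, join], fun i hi => by simp [cutHi, join], fun i j => ?_⟩
  simp only [cutHi, join, Nat.add_sub_cancel, Nat.le_add_left, true_and]
  have := G₁.edge_lt (i + G₁.n) (j + G₁.n)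
  constructor
  · rintro (e | e | ⟨hi, -⟩)
    exacts [absurd (this e).1 (by omega), e, absurd hi (by omega)]
  · exact fun e => .inr (.inl e)

end Graph

section Interpretation

variable {B : Type} [Inhabited B] (unr : B → Bool)

theorem topOrdered_interpG (Γ : GCtx B) : (Γ.interpG unr).TopOrdered := by
  induction Γ with
  | empty => exact fun _ _ e => e.elim
  | bind b =>
    unfold GCtx.interpG
    split_ifs
    exacts [fun _ _ e => e.elim, fun _ _ e => e.elim]
  | comma _ _ ih₁ ih₂ => exact ih₁.join ih₂
  | par _ _ ih₁ ih₂ => exact ih₁.union ih₂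

theorem splittable_interpG (Γ : GCtx B) : (Γ.interpG unr).Splittable := by
  induction Γ with
  | empty => intro a b hab hb; exact absurd hb (by simp [GCtx.interpG, Graph.zero]; omega)
  | bind b =>
    intro a b' hab hb
    unfold GCtx.interpG at hb
    split_ifs at hb <;> simp [Graph.zero] at hb <;> omega
  | comma Γ₁ Γ₂ ih₁ ih₂ =>
    refine Graph.Splittable.of_cut (Nat.le_add_right _ _)
      ((Graph.cutLo_join_agree _ _).symm.splittable ih₁)
      ((Graph.cutHi_join_agree _ _).symm.splittable ih₂) (.inr ?_)
    exact fun i j hi hj hjn => .inr (.inr ⟨hi, hj, hjn⟩)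
  | par Γ₁ Γ₂ ih₁ ih₂ =>
    refine Graph.Splittable.of_cut (Nat.le_add_right _ _)
      ((Graph.cutLo_union_agree _ _).symm.splittable ih₁)
      ((Graph.cutHi_union_agree _ _).symm.splittable ih₂) (.inl ?_)
    rintro i j hi hj (e | ⟨hi', -⟩)
    exacts [absurd (Graph.edge_lt _ _ _ e).2 (by omega), absurd hi' (by omega)]

end Interpretation

theorem realize_respects_iso_general {B : Type} [Inhabited B] (unr : B → Bool)
    (Γ₁ Γ₂ : GCtx B)
    (hiso : Graph.Iso (GCtx.interpG unr Γ₁) (GCtx.interpG unr Γ₂)) :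
    ∃ Δ₁ Δ₂ : GCtx B,
      Graph.realize (GCtx.interpG unr Γ₁) = some Δ₁ ∧
      Graph.realize (GCtx.interpG unr Γ₂) = some Δ₂ ∧
      CtxEquiv unr Δ₁ Δ₂ := by
  obtain ⟨Δ₁, h₁⟩ := (splittable_interpG unr Γ₁).exists_realize
  obtain ⟨Δ₂, h₂⟩ := (splittable_interpG unr Γ₂).exists_realize
  obtain ⟨φ, e⟩ := hiso.exists_isoVia
  exact ⟨Δ₁, Δ₂, h₁, h₂, Graph.ctxEquiv_of_isoVia unr (topOrdered_interpG unr Γ₁)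
    (topOrdered_interpG unr Γ₂) e h₁ h₂⟩

/-- **Realization respects isomorphism.** For contexts `Γ₁`, `Γ₂` containing
no unrestricted bindings, if `⟦Γ₁⟧ ≃ ⟦Γ₂⟧` then `⌜⟦Γ₁⟧⌝ ≡ ⌜⟦Γ₂⟧⌝`. -/
theorem realize_respects_iso {B : Type} [Inhabited B] (unr : B → Bool)
    (Γ₁ Γ₂ : GCtx B)
    (h₁ : ∀ b ∈ GCtx.toList Γ₁, unr b = false)
    (h₂ : ∀ b ∈ GCtx.toList Γ₂, unr b = false)
    (hiso : Graph.Iso (GCtx.interpG unr Γ₁) (GCtx.interpG unr Γ₂)) :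
    ∃ Δ₁ Δ₂ : GCtx B,
      Graph.realize (GCtx.interpG unr Γ₁) = some Δ₁ ∧
      Graph.realize (GCtx.interpG unr Γ₂) = some Δ₂ ∧
      CtxEquiv unr Δ₁ Δ₂ :=
  realize_respects_iso_general unr Γ₁ Γ₂ hiso

end LawOrder
end

section
/- Uniqueness of union decompositions up to isomorphism: let (𝔊¹ᵢ)_{0 ≤ i ≤ n₁} and (𝔊²ⱼ)_{0 ≤ j ≤ n₂} be union decompositions. If 𝔊¹₀ ∪ ⋯ ∪ 𝔊¹_{n₁} ≃ 𝔊²₀ ∪ ⋯ ∪ 𝔊²_{n₂}, then n₁ = n₂ and there exists a bijection g of {0, …, n₁} such that 𝔊¹ᵢ ≃ 𝔊²_{g(i)} for every 0 ≤ i ≤ n₁. -/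
set_option autoImplicit false
set_option linter.unusedVariables false

namespace LawOrder

/-!
Inside a union of weakly connected pieces, two vertices are weakly connected exactly when they
lie in the same piece, and each piece sits in the union as an induced subgraph. An isomorphism
of the unions preserves weak connectivity, so it carries the pieces of one decomposition (which
are nonempty, hence genuine connectivity classes) bijectively onto those of the other, and it
restricts to an isomorphism between corresponding pieces.
-/

theorem _root_.Function.Surjective.exists_equiv_of_eq_iff_eq {α ι κ : Type*}
    {p : α → ι} {q : α → κ} (hp : p.Surjective) (hq : q.Surjective)
    (h : ∀ x y, p x = p y ↔ q x = q y) : ∃ g : ι ≃ κ, ∀ x, g (p x) = q x := by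
  have hqp : ∀ x, q (Function.surjInv hp (p x)) = q x :=
    fun x => (h _ _).1 (Function.surjInv_eq hp _)
  have hpq : ∀ x, p (Function.surjInv hq (q x)) = p x :=
    fun x => (h _ _).2 (Function.surjInv_eq hq _)
  refine ⟨⟨fun i => q (Function.surjInv hp i), fun k => p (Function.surjInv hq k),
    fun i => ?_, fun k => ?_⟩, hqp⟩
  · dsimp only
    rw [hpq, Function.surjInv_eq hp]
  · dsimp only
    rw [hqp, Function.surjInv_eq hq]

namespace Graph

variable {B : Type}

def IsInducedEmbedding (G H : Graph B) (f : Fin G.n → Fin H.n) : Prop :=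
  f.Injective ∧ (∀ i j, H.edge (f i) (f j) ↔ G.edge i j) ∧ ∀ i, H.label (f i) = G.label i

theorem iso_iff_exists_equiv {G H : Graph B} :
    G.Iso H ↔ ∃ σ : Fin H.n ≃ Fin G.n, IsInducedEmbedding H G σ := by
  constructor
  · rintro ⟨hn, f, hf, hedge, hlabel⟩
    exact ⟨(finCongr hn.symm).trans (Equiv.ofBijective f hf), Equiv.injective _,
      fun i j => hedge (Fin.cast hn.symm i) (Fin.cast hn.symm j),
      fun i => hlabel (Fin.cast hn.symm i)⟩
  · rintro ⟨σ, -, hedge, hlabel⟩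
    have hn : G.n = H.n := by simpa using (Fintype.card_congr σ).symm
    exact ⟨hn, (finCongr hn).trans σ, Equiv.bijective _,
      fun i j => hedge (Fin.cast hn i) (Fin.cast hn j), fun i => hlabel (Fin.cast hn i)⟩

theorem IsInducedEmbedding.comp {G H K : Graph B} {f : Fin G.n → Fin H.n}
    {g : Fin H.n → Fin K.n} (hg : IsInducedEmbedding H K g) (hf : IsInducedEmbedding G H f) :
    IsInducedEmbedding G K (g ∘ f) :=
  ⟨hg.1.comp hf.1, fun i j => (hg.2.1 _ _).trans (hf.2.1 i j),
    fun i => (hg.2.2 _).trans (hf.2.2 i)⟩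

theorem IsInducedEmbedding.symm {G H : Graph B} {σ : Fin G.n ≃ Fin H.n}
    (hσ : IsInducedEmbedding G H σ) : IsInducedEmbedding H G σ.symm :=
  ⟨σ.symm.injective, fun i j => by rw [← hσ.2.1, σ.apply_symm_apply, σ.apply_symm_apply],
    fun i => by rw [← hσ.2.2, σ.apply_symm_apply]⟩

theorem iso_of_range_eq {G H K : Graph B} {f : Fin G.n → Fin K.n} {g : Fin H.n → Fin K.n}
    (hf : IsInducedEmbedding G K f) (hg : IsInducedEmbedding H K g)
    (hfg : Set.range f = Set.range g) : G.Iso H := by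
  let σ : Fin H.n ≃ Fin G.n := (Equiv.ofInjective g hg.1).trans
    ((Equiv.setCongr hfg.symm).trans (Equiv.ofInjective f hf.1).symm)
  have hσ : ∀ i, f (σ i) = g i := fun i => Equiv.apply_ofInjective_symm hf.1 _
  refine iso_iff_exists_equiv.2 ⟨σ, σ.injective, fun i j => ?_, fun i => ?_⟩
  · rw [← hf.2.1, hσ, hσ, hg.2.1]
  · rw [← hf.2.2, hσ, hg.2.2]

theorem IsInducedEmbedding.reflTransGen {G H : Graph B} {f : Fin G.n → Fin H.n}
    (hf : IsInducedEmbedding G H f) {u w : Fin G.n}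
    (h : Relation.ReflTransGen (Relation.SymmGen G.edge) u w) :
    Relation.ReflTransGen (Relation.SymmGen H.edge) (f u) (f w) := by
  -- `WeaklyConnected` speaks about `ℕ`, so `f` is extended to `ℕ` before lifting the path.
  let F : ℕ → ℕ := fun v => if hv : v < G.n then f ⟨v, hv⟩ else v
  have hF : ∀ v : Fin G.n, F v = f v := fun v => dif_pos v.isLt
  have hstep : ∀ x y, G.edge x y → H.edge (F x) (F y) := by
    intro x y hxy
    obtain ⟨hx, hy⟩ := G.edge_lt x y hxy
    simpa [F, hx, hy] using (hf.2.1 ⟨x, hx⟩ ⟨y, hy⟩).2 hxy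
  rw [← hF, ← hF]
  refine h.lift F fun x y hxy => ?_
  rcases hxy with hxy | hxy
  · exact .of_rel (hstep x y hxy)
  · exact .of_rel_symm (hstep y x hxy)

theorem reflTransGen_symmGen_equiv_iff {G H : Graph B} {σ : Fin G.n ≃ Fin H.n}
    (hσ : IsInducedEmbedding G H σ) (u w : Fin G.n) :
    Relation.ReflTransGen (Relation.SymmGen H.edge) (σ u) (σ w) ↔
      Relation.ReflTransGen (Relation.SymmGen G.edge) u w := by
  refine ⟨fun h => ?_, hσ.reflTransGen⟩
  simpa using hσ.symm.reflTransGen h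

theorem union_assoc (G₁ G₂ G₃ : Graph B) :
    (G₁.union G₂).union G₃ = G₁.union (G₂.union G₃) := by
  obtain ⟨n₁, l₁, e₁, h₁⟩ := G₁
  obtain ⟨n₂, l₂, e₂, h₂⟩ := G₂
  obtain ⟨n₃, l₃, e₃, h₃⟩ := G₃
  simp only [union, mk.injEq]
  refine ⟨Nat.add_assoc .., funext fun i => ?_, funext₂ fun i j => propext ?_⟩
  · split_ifs <;> first | rfl | omega | (congr 1; omega)
  · simp only [Nat.sub_sub]
    constructor
    · rintro ((h | ⟨hi, hj, h⟩) | ⟨hi, hj, h⟩)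
      · exact .inl h
      · exact .inr ⟨hi, hj, .inl h⟩
      · exact .inr ⟨by omega, by omega, .inr ⟨by omega, by omega, h⟩⟩
    · rintro (h | ⟨hi, hj, h | ⟨hi', hj', h⟩⟩)
      · exact .inl (.inl h)
      · exact .inl (.inr ⟨hi, hj, h⟩)
      · exact .inr ⟨by omega, by omega, h⟩

theorem unionList_cons (A C : Graph B) (L : List (Graph B)) :
    unionList A (C :: L) = A.union (unionList C L) := by
  induction L generalizing A C with
  | nil => rfl
  | cons D L ih =>
    simp only [unionList, List.foldl_cons] at ih ⊢
    rw [ih, ih, union_assoc]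

theorem n_unionList (A : Graph B) (As : List (Graph B)) :
    (unionList A As).n = ((A :: As).map n).sum := by
  induction As generalizing A with
  | nil => simp [unionList]
  | cons C Cs ih =>
    rw [unionList_cons, List.map_cons, List.sum_cons, ← ih]
    rfl

theorem union_edge_of_lt {G₁ G₂ : Graph B} {a b : ℕ} (ha : a < G₁.n) :
    (G₁.union G₂).edge a b ↔ G₁.edge a b := by
  simp only [union, or_iff_left_iff_imp]
  omega

theorem union_edge_add_add {G₁ G₂ : Graph B} {a b : ℕ} :
    (G₁.union G₂).edge (G₁.n + a) (G₁.n + b) ↔ G₂.edge a b := by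
  have : ¬ G₁.edge (G₁.n + a) (G₁.n + b) := fun h => by have := G₁.edge_lt _ _ h; omega
  simp [union, this]

theorem union_label_of_lt {G₁ G₂ : Graph B} {a : ℕ} (ha : a < G₁.n) :
    (G₁.union G₂).label a = G₁.label a :=
  if_pos ha

theorem union_label_add {G₁ G₂ : Graph B} {a : ℕ} :
    (G₁.union G₂).label (G₁.n + a) = G₂.label a := by
  simp [union]

def offset (L : List (Graph B)) (k : ℕ) : ℕ := ((L.take k).map n).sum

@[simp]
theorem offset_zero (L : List (Graph B)) : offset L 0 = 0 := rfl

@[simp]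
theorem offset_cons_succ (G : Graph B) (L : List (Graph B)) (k : ℕ) :
    offset (G :: L) (k + 1) = G.n + offset L k := by
  simp [offset]

theorem offset_add_lt_sum {L : List (Graph B)} {k : ℕ} (hk : k < L.length) {a : ℕ}
    (ha : a < L[k].n) : offset L k + a < (L.map n).sum := by
  induction L generalizing k with
  | nil => simp at hk
  | cons G L ih =>
    cases k with
    | zero => simp at ha ⊢; omega
    | succ k =>
      have := ih (Nat.lt_of_succ_lt_succ hk) ha
      simp only [offset_cons_succ, List.map_cons, List.sum_cons]
      omega

theorem edge_unionList_offset_add {A : Graph B} {As : List (Graph B)} {k : ℕ}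
    (hk : k < (A :: As).length) {a b : ℕ} (ha : a < (A :: As)[k].n) :
    (unionList A As).edge (offset (A :: As) k + a) (offset (A :: As) k + b) ↔
      (A :: As)[k].edge a b := by
  induction As generalizing A k with
  | nil =>
    obtain rfl : k = 0 := by simpa using hk
    simp [unionList]
  | cons C Cs ih =>
    rw [unionList_cons]
    cases k with
    | zero => simpa using union_edge_of_lt ha
    | succ k =>
      simpa [Nat.add_assoc, union_edge_add_add] using ih (Nat.lt_of_succ_lt_succ hk) ha

theorem label_unionList_offset_add {A : Graph B} {As : List (Graph B)} {k : ℕ}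
    (hk : k < (A :: As).length) {a : ℕ} (ha : a < (A :: As)[k].n) :
    (unionList A As).label (offset (A :: As) k + a) = (A :: As)[k].label a := by
  induction As generalizing A k with
  | nil =>
    obtain rfl : k = 0 := by simpa using hk
    simp [unionList]
  | cons C Cs ih =>
    rw [unionList_cons]
    cases k with
    | zero => simpa using union_label_of_lt ha
    | succ k =>
      simpa [Nat.add_assoc, union_label_add] using ih (Nat.lt_of_succ_lt_succ hk) ha

def pieceOf : List (Graph B) → ℕ → ℕ
  | [], _ => 0
  | G :: L, v => if v < G.n then 0 else pieceOf L (v - G.n) + 1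

theorem pieceOf_offset_add {L : List (Graph B)} {k : ℕ} (hk : k < L.length) {a : ℕ}
    (ha : a < L[k].n) : pieceOf L (offset L k + a) = k := by
  induction L generalizing k with
  | nil => simp at hk
  | cons G L ih =>
    cases k with
    | zero => simpa [pieceOf] using ha
    | succ k =>
      have := ih (Nat.lt_of_succ_lt_succ hk) ha
      simp [pieceOf, Nat.add_assoc, this]

theorem exists_offset_add_eq {L : List (Graph B)} {v : ℕ} (hv : v < (L.map n).sum) :
    ∃ k, ∃ hk : k < L.length, ∃ a < L[k].n, offset L k + a = v := by
  induction L generalizing v with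
  | nil => simp at hv
  | cons G L ih =>
    by_cases hG : v < G.n
    · exact ⟨0, by simp, v, hG, by simp⟩
    · obtain ⟨k, hk, a, ha, hka⟩ := ih (v := v - G.n) (by simp at hv; omega)
      exact ⟨k + 1, by simpa using hk, a, ha, by simp; omega⟩

theorem pieceOf_lt_length {L : List (Graph B)} {v : ℕ} (hv : v < (L.map n).sum) :
    pieceOf L v < L.length := by
  obtain ⟨k, hk, a, ha, rfl⟩ := exists_offset_add_eq hv
  rwa [pieceOf_offset_add hk ha]

theorem pieceOf_eq_of_edge {A : Graph B} {As : List (Graph B)} {u w : ℕ}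
    (h : (unionList A As).edge u w) : pieceOf (A :: As) u = pieceOf (A :: As) w := by
  induction As generalizing A u w with
  | nil =>
    obtain ⟨hu, hw⟩ := A.edge_lt u w h
    simp [pieceOf, hu, hw]
  | cons C Cs ih =>
    rw [unionList_cons] at h
    rcases h with h | ⟨hu, hw, h⟩
    · obtain ⟨hu, hw⟩ := A.edge_lt u w h
      simp [pieceOf, hu, hw]
    · have := ih h
      simp only [pieceOf] at this ⊢
      simp [Nat.not_lt.2 hu, Nat.not_lt.2 hw, this]

theorem pieceOf_eq_of_reflTransGen {A : Graph B} {As : List (Graph B)} {u w : ℕ}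
    (h : Relation.ReflTransGen (Relation.SymmGen (unionList A As).edge) u w) :
    pieceOf (A :: As) u = pieceOf (A :: As) w := by
  induction h with
  | refl => rfl
  | tail _ hstep ih =>
    rcases hstep with hstep | hstep
    · exact ih.trans (pieceOf_eq_of_edge hstep)
    · exact ih.trans (pieceOf_eq_of_edge hstep).symm

theorem reflTransGen_iff_pieceOf_eq {A : Graph B} {As : List (Graph B)}
    (hwc : ∀ G ∈ A :: As, G.WeaklyConnected) {u w : ℕ} (hu : u < (unionList A As).n)
    (hw : w < (unionList A As).n) :
    Relation.ReflTransGen (Relation.SymmGen (unionList A As).edge) u w ↔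
      pieceOf (A :: As) u = pieceOf (A :: As) w := by
  refine ⟨pieceOf_eq_of_reflTransGen, ?_⟩
  rw [n_unionList] at hu hw
  obtain ⟨k, hk, a, ha, rfl⟩ := exists_offset_add_eq hu
  obtain ⟨k', hk', b, hb, rfl⟩ := exists_offset_add_eq hw
  rw [pieceOf_offset_add hk ha, pieceOf_offset_add hk' hb]
  rintro rfl
  have hstep : ∀ x y, (A :: As)[k].edge x y →
      (unionList A As).edge (offset (A :: As) k + x) (offset (A :: As) k + y) :=
    fun x y h => (edge_unionList_offset_add hk ((A :: As)[k].edge_lt x y h).1).2 h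
  refine ((hwc _ (List.getElem_mem hk)) a b ha hb).lift (offset (A :: As) k + ·) ?_
  rintro x y (h | h)
  · exact .of_rel (hstep x y h)
  · exact .of_rel_symm (hstep y x h)

def piece (A : Graph B) (As : List (Graph B)) (v : Fin (unionList A As).n) :
    Fin (As.length + 1) :=
  ⟨pieceOf (A :: As) v, pieceOf_lt_length (v.isLt.trans_eq (n_unionList A As))⟩

def pieceEmb (A : Graph B) (As : List (Graph B)) (k : Fin (As.length + 1))
    (a : Fin ((A :: As).get k).n) : Fin (unionList A As).n :=
  ⟨offset (A :: As) k + a, (offset_add_lt_sum k.isLt a.isLt).trans_eq (n_unionList A As).symm⟩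

theorem piece_pieceEmb (A : Graph B) (As : List (Graph B)) (k : Fin (As.length + 1))
    (a : Fin ((A :: As).get k).n) : piece A As (pieceEmb A As k a) = k :=
  Fin.ext (pieceOf_offset_add k.isLt a.isLt)

theorem mem_range_pieceEmb {A : Graph B} {As : List (Graph B)} {k : Fin (As.length + 1)}
    {v : Fin (unionList A As).n} : v ∈ Set.range (pieceEmb A As k) ↔ piece A As v = k := by
  refine ⟨by rintro ⟨a, rfl⟩; exact piece_pieceEmb A As k a, fun hv => ?_⟩
  obtain ⟨k', hk', a, ha, hv'⟩ := exists_offset_add_eq (v.isLt.trans_eq (n_unionList A As))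
  obtain rfl : k = ⟨k', hk'⟩ := by
    rw [← hv, piece, Fin.mk.injEq, ← hv', pieceOf_offset_add hk' ha]
  exact ⟨⟨a, ha⟩, Fin.ext hv'⟩

theorem piece_surjective {A : Graph B} {As : List (Graph B)}
    (hpos : ∀ G ∈ A :: As, 0 < G.n) : (piece A As).Surjective :=
  fun k => ⟨pieceEmb A As k ⟨0, hpos _ (List.get_mem _ _)⟩, piece_pieceEmb A As k _⟩

theorem isInducedEmbedding_pieceEmb (A : Graph B) (As : List (Graph B))
    (k : Fin (As.length + 1)) : IsInducedEmbedding ((A :: As).get k) (unionList A As)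
      (pieceEmb A As k) :=
  ⟨fun a b hab => Fin.ext (Nat.add_left_cancel (Fin.val_eq_of_eq hab)),
    fun a b => edge_unionList_offset_add k.isLt a.isLt,
    fun a => label_unionList_offset_add k.isLt a.isLt⟩

theorem piece_eq_piece_iff {A : Graph B} {As : List (Graph B)}
    (hwc : ∀ G ∈ A :: As, G.WeaklyConnected) (u w : Fin (unionList A As).n) :
    piece A As u = piece A As w ↔
      Relation.ReflTransGen (Relation.SymmGen (unionList A As).edge) u w := by
  rw [reflTransGen_iff_pieceOf_eq hwc u.isLt w.isLt, piece, piece, Fin.mk.injEq]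

end Graph

/-- **Uniqueness of union decompositions up to isomorphism.** If two union
decompositions (given as nonempty sequences `A :: As` and `Bh :: Bs` of
weakly connected, nonempty graph representations) have isomorphic unions,
then they have the same length and their components correspond via a
bijection, up to isomorphism. -/
theorem union_decomposition_unique {B : Type}
    (A : Graph B) (As : List (Graph B)) (Bh : Graph B) (Bs : List (Graph B))
    (hA : ∀ G ∈ A :: As, G.Acyclic ∧ G.WeaklyConnected ∧ 0 < G.n)
    (hB : ∀ G ∈ Bh :: Bs, G.Acyclic ∧ G.WeaklyConnected ∧ 0 < G.n)
    (hiso : (Graph.unionList A As).Iso (Graph.unionList Bh Bs)) :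
    As.length = Bs.length ∧
    ∃ g : Fin (As.length + 1) ≃ Fin (Bs.length + 1),
      ∀ i : Fin (As.length + 1),
        ((A :: As).get i).Iso ((Bh :: Bs).get (g i)) := by
  obtain ⟨σ, hσ⟩ := Graph.iso_iff_exists_equiv.1 hiso
  have hfibres : ∀ x y, Graph.piece A As x = Graph.piece A As y ↔
      Graph.piece Bh Bs (σ.symm x) = Graph.piece Bh Bs (σ.symm y) := fun x y => by
    rw [Graph.piece_eq_piece_iff (fun G hG => (hA G hG).2.1),
      Graph.piece_eq_piece_iff (fun G hG => (hB G hG).2.1),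
      ← Graph.reflTransGen_symmGen_equiv_iff hσ, σ.apply_symm_apply, σ.apply_symm_apply]
  obtain ⟨g, hg⟩ := (Graph.piece_surjective fun G hG => (hA G hG).2.2).exists_equiv_of_eq_iff_eq
    ((Graph.piece_surjective fun G hG => (hB G hG).2.2).comp σ.symm.surjective) hfibres
  refine ⟨by simpa using Fintype.card_congr g, g, fun i => ?_⟩
  refine Graph.iso_of_range_eq (Graph.isInducedEmbedding_pieceEmb A As i)
    (hσ.comp (Graph.isInducedEmbedding_pieceEmb Bh Bs (g i))) (Set.ext fun x => ?_)
  rw [Set.range_comp, σ.image_eq_preimage_symm, Set.mem_preimage, Graph.mem_range_pieceEmb,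
    Graph.mem_range_pieceEmb, ← g.apply_eq_iff_eq, hg, Function.comp_apply]

end LawOrder
end

section
/- Cut recovery for topologically ordered graphs: let 𝔊 be a topologically ordered graph representation. If n is a union cut of 𝔊, then 𝔊 = 𝔊_{<n} ∪ 𝔊_{≥n}; and if n is a join cut of 𝔊, then 𝔊 equals the join 𝔊_{<n} ; 𝔊_{≥n}. -/
set_option autoImplicit false
set_option linter.unusedVariables false

namespace LawOrder

/-- **Cut recovery for topologically ordered graphs.** If `n` is a union cut
of a topologically ordered `𝔊` then `𝔊 = 𝔊_{<n} ∪ 𝔊_{≥n}`; if `n` is a join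
cut then `𝔊 = 𝔊_{<n} ; 𝔊_{≥n}`. -/
theorem cut_recovery {B : Type} (G : Graph B) (hacyc : G.Acyclic)
    (hto : G.TopOrdered) (n : ℕ) :
    (G.UnionCut n → G = (G.cutLo n).union (G.cutHi n)) ∧
    (G.JoinCut n → G = (G.cutLo n).join (G.cutHi n)) := by
  have ext' : ∀ G₁ G₂ : Graph B, G₁.n = G₂.n → G₁.label = G₂.label →
      G₁.edge = G₂.edge → G₁ = G₂ := by
    rintro ⟨n₁, l₁, e₁, h₁⟩ ⟨n₂, l₂, e₂, h₂⟩ h h' h''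
    simp_all
  have hlab : ∀ k : ℕ, G.label =
      (fun i => if i < k then G.label i else G.label (i - k + k)) := by
    intro k; funext i
    by_cases h : i < k <;> simp [h]
    congr 1; omega
  constructor
  · rintro ⟨h0, hn, hcut⟩
    apply ext'
    · simp [Graph.union, Graph.cutLo, Graph.cutHi]; omega
    · exact hlab n
    · funext i j
      simp only [Graph.union, Graph.cutLo, Graph.cutHi]
      apply propext
      constructor
      · intro h
        have hlt := G.edge_lt _ _ h
        have hij := hto _ _ h
        by_cases hi : i < n
        · by_cases hj : j < n
          · exact Or.inl ⟨h, hi, hj⟩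
          · exact absurd h (hcut _ _ hi (by omega))
        · have : i - n + n = i := by omega
          have hjn : ¬ j < n := by omega
          refine Or.inr ⟨by omega, by omega, ?_⟩
          rw [this]; rwa [show j - n + n = j by omega]
      · rintro (⟨h, _, _⟩ | ⟨hi, hj, h⟩)
        · exact h
        · rwa [show i - n + n = i by omega, show j - n + n = j by omega] at h
  · rintro ⟨h0, hn, hcut⟩
    apply ext'
    · simp [Graph.join, Graph.cutLo, Graph.cutHi]; omega
    · exact hlab n
    · funext i j
      simp only [Graph.join, Graph.cutLo, Graph.cutHi]
      apply propext
      constructor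
      · intro h
        have hlt := G.edge_lt _ _ h
        have hij := hto _ _ h
        by_cases hi : i < n
        · by_cases hj : j < n
          · exact Or.inl ⟨h, hi, hj⟩
          · exact Or.inr (Or.inr ⟨hi, by omega, by omega⟩)
        · refine Or.inr (Or.inl ⟨by omega, by omega, ?_⟩)
          rwa [show i - n + n = i by omega, show j - n + n = j by omega]
      · rintro (⟨h, _, _⟩ | ⟨hi, hj, h⟩ | ⟨hi, hj, hj'⟩)
        · exact h
        · rwa [show i - n + n = i by omega, show j - n + n = j by omega] at h
        · exact hcut _ _ hi hj (by omega)

end LawOrder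
end

section
/- Traceability of joins: the join 𝔊₁ ; 𝔊₂ of two graph representations is traceable if and only if both 𝔊₁ and 𝔊₂ are traceable. -/
set_option autoImplicit false
set_option linter.unusedVariables false

namespace LawOrder

section JoinAux

/-- Glue two permutations into a permutation of `Fin (n₁ + n₂)`. -/
def glue {n₁ n₂ : ℕ} (f₁ : Equiv.Perm (Fin n₁)) (f₂ : Equiv.Perm (Fin n₂)) :
    Equiv.Perm (Fin (n₁ + n₂)) :=
  finSumFinEquiv.permCongr (Equiv.sumCongr f₁ f₂)

lemma glue_apply_castAdd {n₁ n₂ : ℕ} (f₁ : Equiv.Perm (Fin n₁)) (f₂ : Equiv.Perm (Fin n₂))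
    (i : Fin n₁) : glue f₁ f₂ (Fin.castAdd n₂ i) = Fin.castAdd n₂ (f₁ i) := by
  simp [glue, Equiv.permCongr_apply]

lemma glue_apply_natAdd {n₁ n₂ : ℕ} (f₁ : Equiv.Perm (Fin n₁)) (f₂ : Equiv.Perm (Fin n₂))
    (i : Fin n₂) : glue f₁ f₂ (Fin.natAdd n₁ i) = Fin.natAdd n₁ (f₂ i) := by
  simp [glue, Equiv.permCongr_apply]

lemma glue_apply_lt {n₁ n₂ : ℕ} (f₁ : Equiv.Perm (Fin n₁)) (f₂ : Equiv.Perm (Fin n₂))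
    (x : Fin (n₁ + n₂)) (h : x.val < n₁) :
    (glue f₁ f₂ x).val = (f₁ ⟨x.val, h⟩).val := by
  have hx : x = Fin.castAdd n₂ ⟨x.val, h⟩ := by ext; rfl
  conv_lhs => rw [hx, glue_apply_castAdd]
  simp

lemma glue_apply_ge {n₁ n₂ : ℕ} (f₁ : Equiv.Perm (Fin n₁)) (f₂ : Equiv.Perm (Fin n₂))
    (x : Fin (n₁ + n₂)) (h : n₁ ≤ x.val) :
    (glue f₁ f₂ x).val = n₁ + (f₂ ⟨x.val - n₁, by omega⟩).val := by
  have hx : x = Fin.natAdd n₁ ⟨x.val - n₁, by omega⟩ := by ext; simp; omega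
  conv_lhs => rw [hx, glue_apply_natAdd]
  simp

lemma glue_symm {n₁ n₂ : ℕ} (f₁ : Equiv.Perm (Fin n₁)) (f₂ : Equiv.Perm (Fin n₂)) :
    (glue f₁ f₂).symm = glue f₁.symm f₂.symm :=
  Equiv.ext fun x => by simp [glue, Equiv.permCongr_def]

lemma glue_left_inj {n₁ n₂ : ℕ} {f₁ g₁ : Equiv.Perm (Fin n₁)} {f₂ : Equiv.Perm (Fin n₂)}
    (h : glue f₁ f₂ = glue g₁ f₂) : f₁ = g₁ := by
  have h' : Equiv.sumCongr f₁ f₂ = Equiv.sumCongr g₁ f₂ :=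
    finSumFinEquiv.permCongr.injective h
  apply Equiv.ext
  intro x
  have := congrArg (fun e => e (Sum.inl x)) (congrArg Equiv.toFun h')
  simpa using this

lemma glue_right_inj {n₁ n₂ : ℕ} {f₁ : Equiv.Perm (Fin n₁)} {f₂ g₂ : Equiv.Perm (Fin n₂)}
    (h : glue f₁ f₂ = glue f₁ g₂) : f₂ = g₂ := by
  have h' : Equiv.sumCongr f₁ f₂ = Equiv.sumCongr f₁ g₂ :=
    finSumFinEquiv.permCongr.injective h
  apply Equiv.ext
  intro x
  have := congrArg (fun e => e (Sum.inr x)) (congrArg Equiv.toFun h')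
  simpa using this

/-- A permutation of `Fin (n₁ + n₂)` whose inverse sends the first block below
the second block splits as a gluing. -/
lemma perm_block_decomp {n₁ n₂ : ℕ} (f : Equiv.Perm (Fin (n₁ + n₂)))
    (hcross : ∀ i j : Fin (n₁ + n₂), i.val < n₁ → n₁ ≤ j.val → f.symm i < f.symm j) :
    ∃ (f₁ : Equiv.Perm (Fin n₁)) (f₂ : Equiv.Perm (Fin n₂)), f = glue f₁ f₂ := by
  have hcardHi : (Finset.univ.filter (fun j : Fin (n₁ + n₂) => n₁ ≤ j.val)).card
      = n₂ := by
    have himg : (Finset.univ.filter (fun j : Fin (n₁ + n₂) => n₁ ≤ j.val))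
        = Finset.univ.image (Fin.natAdd n₁ : Fin n₂ → Fin (n₁ + n₂)) := by
      ext j
      simp only [Finset.mem_filter, Finset.mem_univ, true_and, Finset.mem_image]
      constructor
      · intro h
        exact ⟨⟨j.val - n₁, by omega⟩, by ext; simp; omega⟩
      · rintro ⟨x, rfl⟩; simp
    rw [himg, Finset.card_image_of_injective _ (fun a b h => by
      have := congrArg Fin.val h; simp at this; exact Fin.ext this)]
    simp
  have hcardLo : (Finset.univ.filter (fun j : Fin (n₁ + n₂) => j.val < n₁)).card
      = n₁ := by
    have himg : (Finset.univ.filter (fun j : Fin (n₁ + n₂) => j.val < n₁))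
        = Finset.univ.image (Fin.castAdd n₂ : Fin n₁ → Fin (n₁ + n₂)) := by
      ext j
      simp only [Finset.mem_filter, Finset.mem_univ, true_and, Finset.mem_image]
      constructor
      · intro h
        exact ⟨⟨j.val, h⟩, by ext; simp⟩
      · rintro ⟨x, rfl⟩; simpa using x.isLt
    rw [himg, Finset.card_image_of_injective _ (fun a b h => by
      have := congrArg Fin.val h; simp at this; exact Fin.ext this)]
    simp
  -- the inverse maps the first block into the first block
  have hlt : ∀ i : Fin (n₁ + n₂), i.val < n₁ → (f.symm i).val < n₁ := by
    intro i hi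
    set S := (Finset.univ.filter (fun j : Fin (n₁ + n₂) => n₁ ≤ j.val)).image f.symm with hS
    have hScard : S.card = n₂ := by
      rw [hS, Finset.card_image_of_injective _ f.symm.injective, hcardHi]
    have hSsub : S ⊆ Finset.Ioi (f.symm i) := by
      intro a ha
      simp only [hS, Finset.mem_image, Finset.mem_filter, Finset.mem_univ, true_and] at ha
      obtain ⟨j, hj, rfl⟩ := ha
      exact Finset.mem_Ioi.2 (hcross i j hi hj)
    have := Finset.card_le_card hSsub
    rw [hScard, Fin.card_Ioi] at this
    omega
  have hge : ∀ i : Fin (n₁ + n₂), n₁ ≤ i.val → n₁ ≤ (f.symm i).val := by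
    intro i hi
    set S := (Finset.univ.filter (fun j : Fin (n₁ + n₂) => j.val < n₁)).image f.symm with hS
    have hScard : S.card = n₁ := by
      rw [hS, Finset.card_image_of_injective _ f.symm.injective, hcardLo]
    have hSsub : S ⊆ Finset.Iio (f.symm i) := by
      intro a ha
      simp only [hS, Finset.mem_image, Finset.mem_filter, Finset.mem_univ, true_and] at ha
      obtain ⟨j, hj, rfl⟩ := ha
      exact Finset.mem_Iio.2 (hcross j i hj hi)
    have := Finset.card_le_card hSsub
    rw [hScard, Fin.card_Iio] at this
    exact this
  -- hence `f` itself also preserves the two blocks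
  have hflt : ∀ i : Fin (n₁ + n₂), i.val < n₁ → (f i).val < n₁ := by
    intro i hi
    by_contra h
    have := hge (f i) (by omega)
    rw [Equiv.symm_apply_apply] at this
    omega
  have hfge : ∀ i : Fin (n₁ + n₂), n₁ ≤ i.val → n₁ ≤ (f i).val := by
    intro i hi
    by_contra h
    have := hlt (f i) (by omega)
    rw [Equiv.symm_apply_apply] at this
    omega
  -- restrictions of `f` to the two blocks
  set g₁ : Fin n₁ → Fin n₁ :=
    fun x => ⟨(f ⟨x.val, by omega⟩).val, hflt _ x.isLt⟩ with hg₁def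
  set g₂ : Fin n₂ → Fin n₂ :=
    fun x => ⟨(f ⟨x.val + n₁, by omega⟩).val - n₁, by
      have h1 := hfge ⟨x.val + n₁, by omega⟩ (by simp)
      have h2 := (f ⟨x.val + n₁, by omega⟩).isLt
      omega⟩ with hg₂def
  have hg₁ : Function.Injective g₁ := by
    intro a b hab
    have h1 : (f ⟨a.val, by omega⟩).val = (f ⟨b.val, by omega⟩).val := by
      simpa [hg₁def] using congrArg Fin.val hab
    have h2 : (⟨a.val, by omega⟩ : Fin (n₁ + n₂)) = ⟨b.val, by omega⟩ :=
      f.injective (Fin.ext h1)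
    exact Fin.ext (by simpa using congrArg Fin.val h2)
  have hg₂ : Function.Injective g₂ := by
    intro a b hab
    have ha := hfge ⟨a.val + n₁, by omega⟩ (by simp)
    have hb := hfge ⟨b.val + n₁, by omega⟩ (by simp)
    have h1 : (f ⟨a.val + n₁, by omega⟩).val - n₁ = (f ⟨b.val + n₁, by omega⟩).val - n₁ := by
      simpa [hg₂def] using congrArg Fin.val hab
    have h1' : (f ⟨a.val + n₁, by omega⟩).val = (f ⟨b.val + n₁, by omega⟩).val := by omega
    have h2 : (⟨a.val + n₁, by omega⟩ : Fin (n₁ + n₂)) = ⟨b.val + n₁, by omega⟩ :=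
      f.injective (Fin.ext h1')
    have := congrArg Fin.val h2
    simp only at this
    exact Fin.ext (by omega)
  refine ⟨Equiv.ofBijective g₁ (Finite.injective_iff_bijective.mp hg₁),
          Equiv.ofBijective g₂ (Finite.injective_iff_bijective.mp hg₂), ?_⟩
  apply Equiv.ext
  intro x
  apply Fin.ext
  by_cases hx : x.val < n₁
  · rw [glue_apply_lt _ _ x hx]
    simp only [Equiv.ofBijective_apply, hg₁def]
  · rw [glue_apply_ge _ _ x (by omega)]
    simp only [Equiv.ofBijective_apply, hg₂def]
    have h1 := hfge x (by omega)
    have heq : (⟨x.val - n₁ + n₁, by omega⟩ : Fin (n₁ + n₂)) = x := by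
      ext; simp; omega
    rw [heq]
    omega

variable {B : Type} {G₁ G₂ : Graph B}

/-- Gluing two topological orders gives a topological order of the join,
and conversely. -/
lemma isTopOrder_glue_iff (f₁ : Equiv.Perm (Fin G₁.n)) (f₂ : Equiv.Perm (Fin G₂.n)) :
    (G₁.join G₂).IsTopOrder (glue f₁ f₂) ↔ G₁.IsTopOrder f₁ ∧ G₂.IsTopOrder f₂ := by
  constructor
  · intro h
    have h' : ∀ i j : Fin (G₁.n + G₂.n), (G₁.join G₂).edge i.val j.val →
        ((glue f₁ f₂).symm i).val < ((glue f₁ f₂).symm j).val := by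
      intro i j hij
      exact h i j hij
    constructor
    · intro i j hij
      have key : ((glue f₁ f₂).symm (Fin.castAdd G₂.n i)).val <
          ((glue f₁ f₂).symm (Fin.castAdd G₂.n j)).val :=
        h' _ _ (Or.inl (by simpa using hij))
      rw [glue_symm,
        glue_apply_lt f₁.symm f₂.symm (Fin.castAdd G₂.n i) (by simpa using i.isLt),
        glue_apply_lt f₁.symm f₂.symm (Fin.castAdd G₂.n j) (by simpa using j.isLt)] at key
      rw [Fin.lt_def]
      simpa using key
    · intro i j hij
      have key : ((glue f₁ f₂).symm (Fin.natAdd G₁.n i)).val <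
          ((glue f₁ f₂).symm (Fin.natAdd G₁.n j)).val :=
        h' _ _ (Or.inr (Or.inl ⟨by simp, by simp, by simpa using hij⟩))
      rw [glue_symm,
        glue_apply_ge f₁.symm f₂.symm (Fin.natAdd G₁.n i) (by simp),
        glue_apply_ge f₁.symm f₂.symm (Fin.natAdd G₁.n j) (by simp)] at key
      have key' := Nat.lt_of_add_lt_add_left key
      rw [Fin.lt_def]
      convert key' using 2 <;> congr 1 <;> ext <;> simp
  · rintro ⟨h₁, h₂⟩
    have goal' : ∀ i j : Fin (G₁.n + G₂.n), (G₁.join G₂).edge i.val j.val →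
        ((glue f₁ f₂).symm i).val < ((glue f₁ f₂).symm j).val := by
      intro i j hij
      rw [glue_symm]
      rcases hij with hij | ⟨hi, hj, hij⟩ | ⟨hi, hj, hjn⟩
      · have hi := (G₁.edge_lt _ _ hij).1
        have hj := (G₁.edge_lt _ _ hij).2
        rw [glue_apply_lt f₁.symm f₂.symm i hi, glue_apply_lt f₁.symm f₂.symm j hj]
        exact h₁ ⟨i.val, hi⟩ ⟨j.val, hj⟩ hij
      · rw [glue_apply_ge f₁.symm f₂.symm i hi, glue_apply_ge f₁.symm f₂.symm j hj]
        have := h₂ ⟨i.val - G₁.n, by omega⟩ ⟨j.val - G₁.n, by omega⟩ hij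
        rw [Fin.lt_def] at this
        omega
      · rw [glue_apply_lt f₁.symm f₂.symm i hi, glue_apply_ge f₁.symm f₂.symm j hj]
        have := (f₁.symm ⟨i.val, hi⟩).isLt
        omega
    intro i j hij
    exact goal' ⟨i.val, i.isLt⟩ ⟨j.val, j.isLt⟩ hij

/-- Any topological order of the join splits as a gluing. -/
lemma isTopOrder_join_decomp (f : Equiv.Perm (Fin (G₁.join G₂).n))
    (hf : (G₁.join G₂).IsTopOrder f) :
    ∃ (f₁ : Equiv.Perm (Fin G₁.n)) (f₂ : Equiv.Perm (Fin G₂.n)), f = glue f₁ f₂ :=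
  perm_block_decomp f
    (fun i j hi hj => hf ⟨i.val, i.isLt⟩ ⟨j.val, j.isLt⟩ (Or.inr (Or.inr ⟨hi, hj, j.isLt⟩)))

end JoinAux

/-- **Traceability of joins.** The join `𝔊₁ ; 𝔊₂` is traceable iff both
`𝔊₁` and `𝔊₂` are traceable. -/
theorem join_traceable {B : Type} (G₁ G₂ : Graph B)
    (hac₁ : G₁.Acyclic) (hac₂ : G₂.Acyclic) :
    (G₁.join G₂).Traceable ↔ (G₁.Traceable ∧ G₂.Traceable) := by
  constructor
  · rintro ⟨f, hf, hu⟩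
    obtain ⟨f₁, f₂, rfl⟩ := isTopOrder_join_decomp f hf
    obtain ⟨h₁, h₂⟩ := (isTopOrder_glue_iff f₁ f₂).1 hf
    refine ⟨⟨f₁, h₁, ?_⟩, ⟨f₂, h₂, ?_⟩⟩
    · intro g₁ hg₁
      exact glue_left_inj (hu (glue g₁ f₂) ((isTopOrder_glue_iff g₁ f₂).2 ⟨hg₁, h₂⟩))
    · intro g₂ hg₂
      exact glue_right_inj (hu (glue f₁ g₂) ((isTopOrder_glue_iff f₁ g₂).2 ⟨h₁, hg₂⟩))
  · rintro ⟨⟨f₁, h₁, u₁⟩, ⟨f₂, h₂, u₂⟩⟩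
    refine ⟨glue f₁ f₂, (isTopOrder_glue_iff f₁ f₂).2 ⟨h₁, h₂⟩, ?_⟩
    intro g hg
    obtain ⟨g₁, g₂, rfl⟩ := isTopOrder_join_decomp g hg
    obtain ⟨hg₁, hg₂⟩ := (isTopOrder_glue_iff g₁ g₂).1 hg
    rw [u₁ g₁ hg₁, u₂ g₂ hg₂]

end LawOrder
end

section
/- Traceability of unions: the union 𝔊₁ ∪ 𝔊₂ of two graph representations is traceable if and only if either 𝔊₁ has zero vertices and 𝔊₂ is traceable, or 𝔊₂ has zero vertices and 𝔊₁ is traceable. -/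
set_option autoImplicit false
set_option linter.unusedVariables false

namespace LawOrder

/-! A topological ordering of a traceable graph must join every two consecutive positions by an
edge: otherwise swapping the two vertices gives a second ordering. If both parts of a union are
nonempty, some two consecutive positions hold vertices of different parts, and no edge of the union
joins them. If one part is empty, the union has the vertices and edges of the other part. -/

theorem swap_adjacent_apply_lt {N : ℕ} {a b k₀ k₁ : Fin N} (hk : k₁.val = k₀.val + 1)
    (hab : a < b) (hne : ¬ (a = k₀ ∧ b = k₁)) :
    Equiv.swap k₀ k₁ a < Equiv.swap k₀ k₁ b := by
  rw [Fin.lt_def] at hab ⊢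
  simp only [Fin.ext_iff] at hne
  simp only [Equiv.swap_apply_def]
  split_ifs <;> simp only [Fin.ext_iff] at * <;> omega

namespace Graph

variable {B : Type}

theorem traceable_congr {G H : Graph B} (hn : G.n = H.n) (he : ∀ i j, G.edge i j ↔ H.edge i j) :
    G.Traceable ↔ H.Traceable := by
  obtain ⟨n, l, e, h⟩ := G
  obtain ⟨n', l', e', h'⟩ := H
  obtain rfl : n = n' := hn
  obtain rfl : e = e' := funext₂ fun i j => propext (he i j)
  rfl

theorem IsTopOrder.swap {G : Graph B} {f : Equiv.Perm (Fin G.n)} (hf : G.IsTopOrder f)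
    {k₀ k₁ : Fin G.n} (hk : k₁.val = k₀.val + 1) (hne : ¬ G.edge (f k₀) (f k₁)) :
    G.IsTopOrder ((Equiv.swap k₀ k₁).trans f) := by
  intro i j hij
  simp only [Equiv.symm_trans_apply, Equiv.symm_swap]
  refine swap_adjacent_apply_lt hk (hf i j hij) ?_
  rintro ⟨hi, hj⟩
  rw [← hi, ← hj, Equiv.apply_symm_apply, Equiv.apply_symm_apply] at hne
  exact hne hij

theorem Traceable.edge_of_succ {G : Graph B} (hG : G.Traceable) {f : Equiv.Perm (Fin G.n)}
    (hf : G.IsTopOrder f) {k₀ k₁ : Fin G.n} (hk : k₁.val = k₀.val + 1) :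
    G.edge (f k₀) (f k₁) := by
  by_contra hne
  have hswap : (Equiv.swap k₀ k₁).trans f = f := hG.unique (hf.swap hk hne) hf
  have : f k₁ = f k₀ := by simpa using congrArg (· k₀) hswap
  have := congrArg Fin.val (f.injective this)
  omega

theorem union_edge_lt_iff {G₁ G₂ : Graph B} {i j : ℕ} (h : (G₁.union G₂).edge i j) :
    i < G₁.n ↔ j < G₁.n := by
  rcases h with h | ⟨hi, hj, -⟩
  · have := G₁.edge_lt i j h
    omega
  · omega

theorem not_traceable_union {G₁ G₂ : Graph B} (h₁ : G₁.n ≠ 0) (h₂ : G₂.n ≠ 0) :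
    ¬ (G₁.union G₂).Traceable := by
  intro hG
  obtain ⟨f, hf⟩ := hG.exists
  have hN : G₁.n < (G₁.union G₂).n := show G₁.n < G₁.n + G₂.n by omega
  have h0 : 0 < (G₁.union G₂).n := by omega
  let q : ℕ → Prop := fun m =>
    ∃ hm : m < (G₁.union G₂).n, ¬ ((f ⟨m, hm⟩).val < G₁.n ↔ (f ⟨0, h0⟩).val < G₁.n)
  have hq0 : ¬ q 0 := fun ⟨_, h⟩ => h Iff.rfl
  have hq : ∃ m, q m := by
    by_cases hf0 : (f ⟨0, h0⟩).val < G₁.n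
    · exact ⟨f.symm ⟨G₁.n, hN⟩, Fin.isLt _, by simp [hf0]⟩
    · exact ⟨f.symm ⟨0, h0⟩, Fin.isLt _, by simpa [hf0] using h₁⟩
  obtain ⟨k, hk, hk1, hk1'⟩ := Nat.exists_not_and_succ_of_not_zero_of_exists hq0 hq
  have hedge := hG.edge_of_succ hf (k₀ := ⟨k, by omega⟩) (k₁ := ⟨k + 1, hk1⟩) rfl
  exact hk1' ((union_edge_lt_iff hedge).symm.trans (not_not.mp (not_exists.mp hk _)))

theorem union_edge_iff_of_n_left_eq_zero {G₁ G₂ : Graph B} (h₁ : G₁.n = 0) (i j : ℕ) :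
    (G₁.union G₂).edge i j ↔ G₂.edge i j := by
  have : ¬ G₁.edge i j := fun h => by have := G₁.edge_lt i j h; omega
  simp [union, h₁, this]

theorem union_edge_iff_of_n_right_eq_zero {G₁ G₂ : Graph B} (h₂ : G₂.n = 0) (i j : ℕ) :
    (G₁.union G₂).edge i j ↔ G₁.edge i j := by
  have : ¬ G₂.edge (i - G₁.n) (j - G₁.n) := fun h => by have := G₂.edge_lt _ _ h; omega
  simp [union, this]

theorem traceable_union_iff_of_n_left_eq_zero {G₁ G₂ : Graph B} (h₁ : G₁.n = 0) :
    (G₁.union G₂).Traceable ↔ G₂.Traceable :=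
  traceable_congr (by simp [union, h₁]) (union_edge_iff_of_n_left_eq_zero h₁)

theorem traceable_union_iff_of_n_right_eq_zero {G₁ G₂ : Graph B} (h₂ : G₂.n = 0) :
    (G₁.union G₂).Traceable ↔ G₁.Traceable :=
  traceable_congr (by simp [union, h₂]) (union_edge_iff_of_n_right_eq_zero h₂)

end Graph

theorem union_traceable_general {B : Type} (G₁ G₂ : Graph B) :
    (G₁.union G₂).Traceable ↔
      ((G₁.n = 0 ∧ G₂.Traceable) ∨ (G₂.n = 0 ∧ G₁.Traceable)) := by
  constructor
  · intro hG
    by_cases h₁ : G₁.n = 0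
    · exact .inl ⟨h₁, (Graph.traceable_union_iff_of_n_left_eq_zero h₁).1 hG⟩
    by_cases h₂ : G₂.n = 0
    · exact .inr ⟨h₂, (Graph.traceable_union_iff_of_n_right_eq_zero h₂).1 hG⟩
    exact absurd hG (Graph.not_traceable_union h₁ h₂)
  · rintro (⟨h₁, hG⟩ | ⟨h₂, hG⟩)
    · exact (Graph.traceable_union_iff_of_n_left_eq_zero h₁).2 hG
    · exact (Graph.traceable_union_iff_of_n_right_eq_zero h₂).2 hG

/-- **Traceability of unions.** The union `𝔊₁ ∪ 𝔊₂` is traceable iff either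
`𝔊₁` has no vertices and `𝔊₂` is traceable, or `𝔊₂` has no vertices and
`𝔊₁` is traceable. -/
theorem union_traceable {B : Type} (G₁ G₂ : Graph B)
    (hac₁ : G₁.Acyclic) (hac₂ : G₂.Acyclic) :
    (G₁.union G₂).Traceable ↔
      ((G₁.n = 0 ∧ G₂.Traceable) ∨ (G₂.n = 0 ∧ G₁.Traceable)) :=
  union_traceable_general G₁ G₂

end LawOrder
end
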